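/- arXiv:1502.02305 — 7 statements merged into one kernel-verified Lean document; each statement's English description precedes it below -/
import Mathlib

section
/- For every p ∈ [1, ∞) and every ρ > 1, the sum over k ∈ ℤ of the p-th moments of the truncations f_{ρ,k} satisfies ((ρ − 1)/ρ)^p · (ρ^p − 1)^{−1} · ‖f‖_p^p ≤ Σ_{k∈ℤ} ‖f_{ρ,k}‖_p^p ≤ ((ρ − 1)/ρ)^{p−1} · ‖f‖_p^p. -/
open MeasureTheory ENNReal

lemma trunc_eq (ρ F : ℝ) (hρ : 1 < ρ) (hF : 0 ≤ F) (k : ℤ) :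
    min (max (F - ρ^k) 0) (ρ^k*(ρ-1)) = min F (ρ^(k+1)) - min F (ρ^k) := by
  have hρ0 : (0:ℝ) < ρ := by linarith
  have h0 : (0:ℝ) < ρ^k := zpow_pos hρ0 k
  have h1 : ρ^(k+1) = ρ^k * ρ := zpow_add_one₀ (ne_of_gt hρ0) k
  rcases le_total F (ρ^k) with h | h
  · rw [max_eq_right (by linarith), min_eq_left (by nlinarith), min_eq_left h,
      min_eq_left (by nlinarith)]
    ring
  · rw [max_eq_left (by linarith), min_eq_right h]
    rcases le_total F (ρ^(k+1)) with h2 | h2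
    · rw [min_eq_left (by nlinarith), min_eq_left h2]
    · rw [min_eq_right (by nlinarith), min_eq_right h2, h1]
      ring

lemma sum_trunc_le (ρ F : ℝ) (hρ : 1 < ρ) (hF : 0 ≤ F) :
    ∑' k : ℤ, ENNReal.ofReal (min (max (F - ρ^k) 0) (ρ^k*(ρ-1))) ≤ ENNReal.ofReal F := by
  have hρ0 : (0:ℝ) < ρ := by linarith
  rw [ENNReal.tsum_eq_iSup_sum]
  refine iSup_le fun s => ?_
  rcases s.eq_empty_or_nonempty with rfl | hs
  · simp
  set a := s.min' hs with ha
  set n := (s.max' hs - a).toNat + 1 with hn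
  have hsub : s ⊆ (Finset.range n).image (fun j : ℕ => a + j) := by
    intro k hk
    have h1 : a ≤ k := s.min'_le k hk
    have h2 : k ≤ s.max' hs := s.le_max' k hk
    refine Finset.mem_image.2 ⟨(k - a).toNat, Finset.mem_range.2 ?_, ?_⟩
    · omega
    · omega
  calc ∑ k ∈ s, ENNReal.ofReal (min (max (F - ρ^k) 0) (ρ^k*(ρ-1)))
      ≤ ∑ k ∈ (Finset.range n).image (fun j : ℕ => a + j),
          ENNReal.ofReal (min (max (F - ρ^k) 0) (ρ^k*(ρ-1))) :=
        Finset.sum_le_sum_of_subset hsub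
    _ = ∑ j ∈ Finset.range n,
          ENNReal.ofReal (min (max (F - ρ^(a+j)) 0) (ρ^(a+j)*(ρ-1))) := by
        refine Finset.sum_image fun x _ y _ h => ?_
        omega
    _ = ENNReal.ofReal (∑ j ∈ Finset.range n, (min F (ρ^(a+(j:ℤ)+1)) - min F (ρ^(a+(j:ℤ))))) := by
        rw [ENNReal.ofReal_sum_of_nonneg]
        · refine Finset.sum_congr rfl fun j _ => ?_
          rw [trunc_eq ρ F hρ hF]
        · intro j _
          have : ρ^(a+(j:ℤ)) ≤ ρ^(a+(j:ℤ)+1) := by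
            apply zpow_le_zpow_right₀ hρ.le; omega
          have := min_le_min (le_refl F) this
          linarith [min_le_min (le_refl F) this]
    _ ≤ ENNReal.ofReal F := by
        apply ENNReal.ofReal_le_ofReal
        have key : ∑ j ∈ Finset.range n, (min F (ρ^(a+(j:ℤ)+1)) - min F (ρ^(a+(j:ℤ))))
            = min F (ρ^(a+(n:ℤ))) - min F (ρ^(a+(0:ℕ):ℤ)) := by
          have := Finset.sum_range_sub (fun j : ℕ => min F (ρ^(a+(j:ℤ)))) n
          rw [← this]
          refine Finset.sum_congr rfl fun j _ => ?_
          congr 2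
          push_cast
          ring
        rw [key]
        have h1 : min F (ρ^(a+(n:ℤ))) ≤ F := min_le_left _ _
        have h2 : 0 ≤ min F (ρ^(a+(0:ℕ):ℤ)) := le_min hF (zpow_pos hρ0 _).le
        linarith

lemma upper_pt (p ρ F : ℝ) (hp : 1 ≤ p) (hρ : 1 < ρ) (hF : 0 ≤ F) :
    ∑' k : ℤ, ENNReal.ofReal ((min (max (F - ρ^k) 0) (ρ^k*(ρ-1))) ^ p) ≤
      ENNReal.ofReal (((ρ-1)/ρ)^(p-1) * F ^ p) := by
  have hρ0 : (0:ℝ) < ρ := by linarith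
  have hp0 : (0:ℝ) < p := by linarith
  set g : ℤ → ℝ := fun k => min (max (F - ρ^k) 0) (ρ^k*(ρ-1)) with hg
  have hg0 : ∀ k, 0 ≤ g k := fun k =>
    le_min (le_max_right _ _) (mul_nonneg (zpow_pos hρ0 k).le (by linarith))
  rcases eq_or_lt_of_le hF with hF0 | hF0
  · have hz : ∀ k : ℤ, min (max (F - ρ^k) 0) (ρ^k*(ρ-1)) = (0:ℝ) := by
      intro k
      have h0 : (0:ℝ) < ρ^k := zpow_pos hρ0 k
      rw [← hF0, max_eq_right (by linarith), min_eq_left (by nlinarith)]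
    simp only [hz, Real.zero_rpow (ne_of_gt hp0), ENNReal.ofReal_zero, tsum_zero]
    exact zero_le
  · set C := (ρ-1)/ρ * F with hC
    have hC0 : 0 < C := mul_pos (div_pos (by linarith) hρ0) hF0
    have hgC : ∀ k, g k ≤ C := by
      intro k
      rcases le_total (ρ^k) (F/ρ) with h | h
      · refine le_trans (min_le_right _ _) ?_
        calc ρ^k*(ρ-1) ≤ F/ρ*(ρ-1) := mul_le_mul_of_nonneg_right h (by linarith)
          _ = C := by rw [hC]; ring
      · rw [div_le_iff₀ hρ0] at h
        refine le_trans (min_le_left _ _) (max_le ?_ hC0.le)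
        have h2 : F - F/ρ = (ρ-1)/ρ * F := by field_simp
        have h3 : F/ρ ≤ ρ^k := by rw [div_le_iff₀ hρ0]; linarith
        rw [hC]; linarith
    have key : ∀ k, (g k) ^ p ≤ C ^ (p-1) * g k := by
      intro k
      rcases eq_or_lt_of_le (hg0 k) with h | h
      · rw [← h, Real.zero_rpow (ne_of_gt hp0), mul_zero]
      · have e : (g k)^p = (g k)^(p-1) * (g k)^(1:ℝ) := by
          rw [← Real.rpow_add h]; norm_num
        rw [e, Real.rpow_one]
        exact mul_le_mul_of_nonneg_right
          (Real.rpow_le_rpow (hg0 k) (hgC k) (by linarith)) (hg0 k)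
    calc ∑' k : ℤ, ENNReal.ofReal ((g k) ^ p)
        ≤ ∑' k : ℤ, ENNReal.ofReal (C^(p-1) * g k) :=
          ENNReal.tsum_le_tsum fun k => ENNReal.ofReal_le_ofReal (key k)
      _ = ENNReal.ofReal (C^(p-1)) * ∑' k : ℤ, ENNReal.ofReal (g k) := by
          simp_rw [ENNReal.ofReal_mul (Real.rpow_nonneg hC0.le _)]
          rw [ENNReal.tsum_mul_left]
      _ ≤ ENNReal.ofReal (C^(p-1)) * ENNReal.ofReal F :=
          mul_le_mul_right (sum_trunc_le ρ F hρ hF) _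
      _ = ENNReal.ofReal (C^(p-1) * F) :=
          (ENNReal.ofReal_mul (Real.rpow_nonneg hC0.le _)).symm
      _ = ENNReal.ofReal (((ρ-1)/ρ)^(p-1) * F ^ p) := by
          congr 1
          rw [hC, Real.mul_rpow (div_nonneg (by linarith) hρ0.le) hF0.le, mul_assoc]
          congr 1
          rw [← Real.rpow_one F, ← Real.rpow_mul hF0.le, ← Real.rpow_add hF0]
          norm_num

lemma lower_pt (p ρ F : ℝ) (hp : 1 ≤ p) (hρ : 1 < ρ) (hF : 0 ≤ F) :
    ENNReal.ofReal (((ρ-1)/ρ)^p * (ρ^p-1)⁻¹ * F^p) ≤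
      ∑' k : ℤ, ENNReal.ofReal ((min (max (F - ρ^k) 0) (ρ^k*(ρ-1))) ^ p) := by
  have hρ0 : (0:ℝ) < ρ := by linarith
  have hp0 : (0:ℝ) < p := by linarith
  rcases eq_or_lt_of_le hF with hF0 | hF0
  · rw [← hF0, Real.zero_rpow (ne_of_gt hp0), mul_zero, ENNReal.ofReal_zero]
    exact zero_le
  obtain ⟨k₀, h1, h2⟩ := _root_.exists_mem_Ico_zpow hF0 hρ
  have hinj : Function.Injective (fun j : ℕ => k₀ - 1 - (j:ℤ)) := by
    intro a b h
    simp only at h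
    omega
  refine le_trans ?_ (tsum_comp_le_tsum_of_injective hinj _)
  have hterm : ∀ j : ℕ, min (max (F - ρ^(k₀-1-(j:ℤ))) 0) (ρ^(k₀-1-(j:ℤ))*(ρ-1))
      = ρ^(k₀-1-(j:ℤ))*(ρ-1) := by
    intro j
    set m : ℤ := k₀ - 1 - (j:ℤ) with hm
    have hk : m + 1 ≤ k₀ := by omega
    have hle : ρ^(m+1) ≤ ρ^k₀ := zpow_le_zpow_right₀ hρ.le hk
    have e : ρ^(m+1) = ρ^m * ρ := zpow_add_one₀ (ne_of_gt hρ0) m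
    have hz : (0:ℝ) < ρ^m := zpow_pos hρ0 m
    have hge : ρ^m*(ρ-1) ≤ F - ρ^m := by nlinarith
    rw [max_eq_left (by nlinarith), min_eq_right hge]
  have hval : ∀ j : ℕ, ((ρ^(k₀-1-(j:ℤ))*(ρ-1))^p : ℝ)
      = ((ρ-1)^p * ρ^(((k₀:ℝ)-1)*p)) * (ρ^(-p))^j := by
    intro j
    rw [Real.mul_rpow (zpow_pos hρ0 _).le (by linarith), mul_comm ((ρ^(k₀-1-(j:ℤ)))^p)]
    rw [← Real.rpow_intCast ρ (k₀-1-(j:ℤ)), ← Real.rpow_mul hρ0.le,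
      ← Real.rpow_natCast (ρ^(-p)) j, ← Real.rpow_mul hρ0.le, mul_assoc,
      ← Real.rpow_add hρ0]
    congr 2
    push_cast
    ring
  calc ENNReal.ofReal (((ρ-1)/ρ)^p * (ρ^p-1)⁻¹ * F^p)
      ≤ ENNReal.ofReal (((ρ-1)^p * ρ^(((k₀:ℝ)-1)*p)) * (1 - ρ^(-p))⁻¹) := by
        apply ENNReal.ofReal_le_ofReal
        have hρp : (1:ℝ) < ρ^p := Real.one_lt_rpow_iff_of_pos hρ0 |>.2 (Or.inl ⟨hρ, hp0⟩)
        have hρpp : (0:ℝ) < ρ^p := by linarith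
        have hFp : F^p ≤ ρ^(((k₀:ℝ)+1)*p) := by
          have : F ≤ ρ^(k₀+1) := h2.le
          calc F^p ≤ (ρ^(k₀+1))^p := Real.rpow_le_rpow hF this hp0.le
            _ = ρ^(((k₀:ℝ)+1)*p) := by
              rw [← Real.rpow_intCast ρ (k₀+1), ← Real.rpow_mul hρ0.le]
              congr 1
              push_cast
              ring
        have hA : ρ^(((k₀:ℝ)+1)*p) = ρ^(((k₀:ℝ)-1)*p) * ρ^p * ρ^p := by
          rw [mul_assoc, ← Real.rpow_add hρ0, ← Real.rpow_add hρ0]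
          congr 1
          ring
        have hneg : ρ^(-p) = (ρ^p)⁻¹ := by
          rw [Real.rpow_neg hρ0.le]
        have hinv : (1 - ρ^(-p))⁻¹ = ρ^p * (ρ^p-1)⁻¹ := by
          rw [hneg, show (1:ℝ) - (ρ^p)⁻¹ = (ρ^p-1)/ρ^p by field_simp, inv_div,
            div_eq_mul_inv]
        have hX0 : (0:ℝ) ≤ ((ρ-1)/ρ)^p * (ρ^p-1)⁻¹ :=
          mul_nonneg (Real.rpow_nonneg (div_nonneg (by linarith) hρ0.le) p)
            (inv_nonneg.2 (by linarith))
        calc ((ρ-1)/ρ)^p * (ρ^p-1)⁻¹ * F^p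
            ≤ ((ρ-1)/ρ)^p * (ρ^p-1)⁻¹ * ρ^(((k₀:ℝ)+1)*p) := by
              exact mul_le_mul_of_nonneg_left hFp hX0
          _ = ((ρ-1)^p * ρ^(((k₀:ℝ)-1)*p)) * (1 - ρ^(-p))⁻¹ := by
              have h3 : ρ^p - 1 ≠ 0 := by linarith
              have h4 : ρ^p ≠ 0 := ne_of_gt hρpp
              rw [hA, hinv, Real.div_rpow (by linarith) hρ0.le]
              field_simp
      _ = ENNReal.ofReal ((ρ-1)^p * ρ^(((k₀:ℝ)-1)*p)) *
            ENNReal.ofReal ((1 - ρ^(-p))⁻¹) := by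
        rw [ENNReal.ofReal_mul (mul_nonneg (Real.rpow_nonneg (by linarith) p)
          (Real.rpow_pos_of_pos hρ0 _).le)]
      _ = ENNReal.ofReal ((ρ-1)^p * ρ^(((k₀:ℝ)-1)*p)) *
            (1 - ENNReal.ofReal (ρ^(-p)))⁻¹ := by
        have hr1 : ρ^(-p) < 1 := Real.rpow_lt_one_of_one_lt_of_neg hρ (by linarith)
        rw [ENNReal.ofReal_inv_of_pos (by linarith [Real.rpow_pos_of_pos hρ0 (-p)] : (0:ℝ) < 1 - ρ^(-p))]
        congr 1
        rw [ENNReal.ofReal_sub _ (Real.rpow_pos_of_pos hρ0 (-p)).le, ENNReal.ofReal_one]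
      _ = ∑' j : ℕ, ENNReal.ofReal ((ρ-1)^p * ρ^(((k₀:ℝ)-1)*p)) *
            (ENNReal.ofReal (ρ^(-p)))^j := by
        rw [ENNReal.tsum_mul_left, ENNReal.tsum_geometric]
      _ = ∑' j : ℕ, ENNReal.ofReal (((ρ-1)^p * ρ^(((k₀:ℝ)-1)*p)) * (ρ^(-p))^j) := by
        refine tsum_congr fun j => ?_
        rw [← ENNReal.ofReal_pow (Real.rpow_pos_of_pos hρ0 (-p)).le,
          ← ENNReal.ofReal_mul (mul_nonneg (Real.rpow_nonneg (by linarith) p)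
            (Real.rpow_pos_of_pos hρ0 _).le)]
      _ ≤ ∑' j : ℕ, ENNReal.ofReal
            ((min (max (F - ρ^(k₀-1-(j:ℤ))) 0) (ρ^(k₀-1-(j:ℤ))*(ρ-1))) ^ p) := by
        apply ENNReal.tsum_le_tsum
        intro j
        rw [hterm j, hval j]

/-- For every `p ∈ [1, ∞)` and every `ρ > 1`, the sum over `k ∈ ℤ`
(taken in `[0, ∞]`) of the `p`-th moments of the truncations
`f_{ρ,k} := min((f − ρ^k)⁺, ρ^k(ρ − 1))` satisfies
`((ρ − 1)/ρ)^p (ρ^p − 1)⁻¹ ‖f‖_p^p ≤ Σ_k ‖f_{ρ,k}‖_p^p ≤ ((ρ − 1)/ρ)^{p−1} ‖f‖_p^p`. -/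
theorem stmt2 {M : Type*} [MeasurableSpace M] (μ : Measure M) [SigmaFinite μ]
    (f : M → ℝ) (hfm : Measurable f) (hf0 : ∀ x, 0 ≤ f x)
    (hfLp : ∀ r : ℝ, 0 < r → Integrable (fun x => f x ^ r) μ)
    (p : ℝ) (hp : 1 ≤ p) (ρ : ℝ) (hρ : 1 < ρ) :
    ENNReal.ofReal (((ρ - 1) / ρ) ^ p * (ρ ^ p - 1)⁻¹ * ∫ x, f x ^ p ∂μ) ≤
      (∑' k : ℤ, ENNReal.ofReal
        (∫ x, (min (max (f x - ρ ^ k) 0) (ρ ^ k * (ρ - 1))) ^ p ∂μ)) ∧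
    (∑' k : ℤ, ENNReal.ofReal
        (∫ x, (min (max (f x - ρ ^ k) 0) (ρ ^ k * (ρ - 1))) ^ p ∂μ)) ≤
      ENNReal.ofReal (((ρ - 1) / ρ) ^ (p - 1) * ∫ x, f x ^ p ∂μ) := by
  have hρ0 : (0:ℝ) < ρ := lt_trans one_pos hρ
  have hp0 : (0:ℝ) < p := lt_of_lt_of_le one_pos hp
  have hgm : ∀ k : ℤ, Measurable fun x => (min (max (f x - ρ^k) 0) (ρ^k*(ρ-1))) ^ p :=
    fun k => by fun_prop
  have hgnn : ∀ (k : ℤ) x, 0 ≤ min (max (f x - ρ^k) 0) (ρ^k*(ρ-1)) :=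
    fun k x => le_min (le_max_right _ _) (mul_nonneg (zpow_pos hρ0 k).le (by linarith))
  have hgint : ∀ k : ℤ, Integrable (fun x => (min (max (f x - ρ^k) 0) (ρ^k*(ρ-1)))^p) μ := by
    intro k
    refine (hfLp p hp0).mono' (hgm k).aestronglyMeasurable (ae_of_all _ fun x => ?_)
    rw [Real.norm_eq_abs, abs_of_nonneg (Real.rpow_nonneg (hgnn k x) p)]
    refine Real.rpow_le_rpow (hgnn k x) ?_ hp0.le
    exact le_trans (min_le_left _ _) (max_le (by linarith [(zpow_pos hρ0 k).le]) (hf0 x))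
  have hsum_eq : (∑' k : ℤ, ENNReal.ofReal
        (∫ x, (min (max (f x - ρ ^ k) 0) (ρ ^ k * (ρ - 1))) ^ p ∂μ))
      = ∫⁻ x, ∑' k : ℤ, ENNReal.ofReal ((min (max (f x - ρ^k) 0) (ρ^k*(ρ-1)))^p) ∂μ := by
    rw [MeasureTheory.lintegral_tsum
      (fun k => ((hgm k).ennreal_ofReal).aemeasurable)]
    exact tsum_congr fun k => MeasureTheory.ofReal_integral_eq_lintegral_ofReal (hgint k)
      (ae_of_all _ fun x => Real.rpow_nonneg (hgnn k x) p)
  have hfpm : Measurable fun x => ENNReal.ofReal (f x ^ p) := by fun_prop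
  have hfint_eq : ENNReal.ofReal (∫ x, f x ^ p ∂μ) = ∫⁻ x, ENNReal.ofReal (f x ^ p) ∂μ :=
    MeasureTheory.ofReal_integral_eq_lintegral_ofReal (hfLp p hp0)
      (ae_of_all _ fun x => Real.rpow_nonneg (hf0 x) p)
  constructor
  · rw [hsum_eq]
    have hρp : (1:ℝ) < ρ^p := (Real.one_lt_rpow_iff_of_pos hρ0).2 (Or.inl ⟨hρ, hp0⟩)
    have hc : 0 ≤ ((ρ-1)/ρ)^p * (ρ^p-1)⁻¹ :=
      mul_nonneg (Real.rpow_nonneg (div_nonneg (by linarith) hρ0.le) p)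
        (inv_nonneg.2 (by linarith))
    rw [ENNReal.ofReal_mul hc, hfint_eq, ← MeasureTheory.lintegral_const_mul _ hfpm]
    refine lintegral_mono fun x => ?_
    rw [← ENNReal.ofReal_mul hc]
    exact lower_pt p ρ (f x) hp hρ (hf0 x)
  · rw [hsum_eq]
    have hc2 : 0 ≤ ((ρ-1)/ρ)^(p-1) :=
      Real.rpow_nonneg (div_nonneg (by linarith) hρ0.le) _
    rw [ENNReal.ofReal_mul hc2, hfint_eq, ← MeasureTheory.lintegral_const_mul _ hfpm]
    refine lintegral_mono fun x => ?_
    rw [← ENNReal.ofReal_mul hc2]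
    exact upper_pt p ρ (f x) hp hρ (hf0 x)
end

section
/- Suppose in addition that f is not μ-almost everywhere equal to 0. Then the normalized entropy functional Φ : (0, ∞) → ℝ defined by Φ(r) := (∫_M f^r ln(f^r) dμ)/(∫_M f^r dμ) − ln (∫_M f^r dμ), with the convention 0 · ln 0 = 0, is nondecreasing in r on (0, ∞). -/
/-!
Write `Z r = ∫ f ^ r` and `D r = (∫ f ^ r log f) / Z r`, so that the functional is
`r * D r - log (Z r)`. Integrating `e ^ y ≥ 1 + y` against `f ^ t dμ` shows that `D t` is a
supporting slope of the convex function `log ∘ Z` at `t`: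
`log Z s ≥ log Z t + (s - t) * D t`. Using this at both ends of `a < b` gives `D a ≤ D b` and
`log Z b - log Z a ≤ (b - a) * D b`, hence `Φ b - Φ a ≥ a * (D b - D a) ≥ 0`.
-/

open MeasureTheory Real Set

theorem monotoneOn_mul_sub_of_add_mul_le {S : Set ℝ} (hS : S ⊆ Ici 0) {L D : ℝ → ℝ}
    (h : ∀ s ∈ S, ∀ t ∈ S, L t + (s - t) * D t ≤ L s) :
    MonotoneOn (fun r => r * D r - L r) S := by
  intro a ha b hb hab
  obtain rfl | hlt := hab.eq_or_lt
  · rfl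
  have hba := h b hb a ha
  have hab' := h a ha b hb
  have hD : D a ≤ D b := by
    refine le_of_mul_le_mul_left ?_ (sub_pos.2 hlt)
    linarith
  have ha0 : 0 ≤ a := hS ha
  nlinarith [mul_le_mul_of_nonneg_left hD ha0]

namespace Real

theorem abs_rpow_mul_log_le {x ε : ℝ} (r : ℝ) (hx : 0 ≤ x) (hε : 0 < ε) :
    |x ^ r * log x| ≤ (x ^ (r - ε) + x ^ (r + ε)) / ε := by
  obtain rfl | hx := hx.eq_or_lt
  · rw [log_zero, mul_zero, abs_zero]
    positivity
  rw [abs_mul, abs_of_pos (rpow_pos_of_pos hx r)]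
  rcases le_total x 1 with hx1 | hx1
  · have hlog : |log x * x ^ ε| ≤ 1 / ε := (abs_log_mul_self_rpow_lt x ε hx hx1 hε).le
    rw [abs_mul, abs_of_pos (rpow_pos_of_pos hx ε)] at hlog
    calc x ^ r * |log x| = x ^ (r - ε) * (|log x| * x ^ ε) := by
          rw [mul_comm |log x|, ← mul_assoc, ← rpow_add hx, sub_add_cancel]
      _ ≤ x ^ (r - ε) * (1 / ε) := by gcongr
      _ ≤ (x ^ (r - ε) + x ^ (r + ε)) / ε := by
          rw [mul_one_div]
          gcongr
          exact le_add_of_nonneg_right (rpow_nonneg hx.le _)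
  · rw [abs_of_nonneg (log_nonneg hx1)]
    calc x ^ r * log x ≤ x ^ r * (x ^ ε / ε) := by gcongr; exact log_le_rpow_div hx.le hε
      _ = x ^ (r + ε) / ε := by rw [rpow_add hx, mul_div_assoc]
      _ ≤ (x ^ (r - ε) + x ^ (r + ε)) / ε := by
          gcongr
          exact le_add_of_nonneg_left (rpow_nonneg hx.le _)

theorem rpow_mul_log_rpow {x : ℝ} (hx : 0 ≤ x) (r : ℝ) :
    x ^ r * log (x ^ r) = r * (x ^ r * log x) := by
  obtain rfl | hx := hx.eq_or_lt
  · rcases eq_or_ne r 0 with rfl | hr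
    · simp
    · simp [zero_rpow hr]
  · rw [log_rpow hx]
    ring

theorem rpow_mul_tangent_le_exp_mul_rpow {x t : ℝ} (s c : ℝ) (hx : 0 ≤ x) (ht : t ≠ 0) :
    x ^ t * ((s - t) * log x - c + 1) ≤ exp (-c) * x ^ s := by
  obtain rfl | hx := hx.eq_or_lt
  · rw [zero_rpow ht, zero_mul]
    positivity
  have hexp : exp (-c) * x ^ (s - t) = exp ((s - t) * log x - c) := by
    rw [rpow_def_of_pos hx, ← exp_add]
    ring_nf
  calc x ^ t * ((s - t) * log x - c + 1) ≤ x ^ t * exp ((s - t) * log x - c) := by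
        gcongr
        exact add_one_le_exp _
    _ = exp (-c) * x ^ s := by
        rw [← hexp, mul_left_comm, ← rpow_add hx, add_sub_cancel]

end Real

section Integral

variable {M : Type*} [MeasurableSpace M] {μ : Measure M} {f : M → ℝ}

theorem integrable_rpow_mul_log {r ε : ℝ} (hf : AEMeasurable f μ) (hf0 : ∀ x, 0 ≤ f x)
    (hε : 0 < ε) (hlo : Integrable (fun x => f x ^ (r - ε)) μ)
    (hhi : Integrable (fun x => f x ^ (r + ε)) μ) :
    Integrable (fun x => f x ^ r * log (f x)) μ := by
  refine ((hlo.add hhi).div_const ε).mono' ?_ (ae_of_all _ fun x => ?_)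
  · exact ((hf.pow_const r).mul (measurable_log.comp_aemeasurable hf)).aestronglyMeasurable
  · exact abs_rpow_mul_log_le r (hf0 x) hε

theorem integral_rpow_pos (hf0 : ∀ x, 0 ≤ f x) {r : ℝ}
    (hfr : Integrable (fun x => f x ^ r) μ) (hne : ¬ f =ᵐ[μ] 0) :
    0 < ∫ x, f x ^ r ∂μ := by
  refine (integral_nonneg fun x => rpow_nonneg (hf0 x) r).lt_of_ne' fun hzero => hne ?_
  have hzero_ae := (integral_eq_zero_iff_of_nonneg (fun x => rpow_nonneg (hf0 x) r) hfr).1 hzero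
  filter_upwards [hzero_ae] with x hx
  by_contra hfx
  exact (rpow_pos_of_pos ((hf0 x).lt_of_ne' hfx) r).ne' hx

theorem log_integral_rpow_add_mul_le {s t : ℝ} (hf0 : ∀ x, 0 ≤ f x) (ht : t ≠ 0)
    (hfs : Integrable (fun x => f x ^ s) μ) (hft : Integrable (fun x => f x ^ t) μ)
    (hft_log : Integrable (fun x => f x ^ t * log (f x)) μ) (hZt : 0 < ∫ x, f x ^ t ∂μ) :
    log (∫ x, f x ^ t ∂μ) + (s - t) * ((∫ x, f x ^ t * log (f x) ∂μ) / ∫ x, f x ^ t ∂μ)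
      ≤ log (∫ x, f x ^ s ∂μ) := by
  set Z := ∫ x, f x ^ t ∂μ with hZ
  set c := (s - t) * ((∫ x, f x ^ t * log (f x) ∂μ) / Z) with hc
  have hsplit : (fun x => f x ^ t * ((s - t) * log (f x) - c + 1))
      = fun x => (s - t) * (f x ^ t * log (f x)) + (1 - c) * f x ^ t := by
    ext x; ring
  have hlhs : ∫ x, f x ^ t * ((s - t) * log (f x) - c + 1) ∂μ = Z := by
    rw [hsplit, integral_add (hft_log.const_mul _) (hft.const_mul _), integral_const_mul,
      integral_const_mul, ← hZ, hc]
    field_simp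
    ring
  have hZ_le : Z ≤ exp (-c) * ∫ x, f x ^ s ∂μ := by
    rw [← hlhs, ← integral_const_mul]
    refine integral_mono ?_ (hfs.const_mul _) fun x =>
      rpow_mul_tangent_le_exp_mul_rpow s c (hf0 x) ht
    rw [hsplit]
    exact (hft_log.const_mul _).add (hft.const_mul _)
  have hZs : 0 < ∫ x, f x ^ s ∂μ := pos_of_mul_pos_right (hZt.trans_le hZ_le) (exp_pos _).le
  calc log Z + c ≤ log (exp (-c) * ∫ x, f x ^ s ∂μ) + c := by gcongr
    _ = log (∫ x, f x ^ s ∂μ) := by rw [log_mul (exp_pos _).ne' hZs.ne', log_exp]; ring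

end Integral

theorem stmt5_general {M : Type*} [MeasurableSpace M] (μ : Measure M)
    (f : M → ℝ) (hfm : Measurable f) (hf0 : ∀ x, 0 ≤ f x)
    (hfLp : ∀ r : ℝ, 0 < r → Integrable (fun x => f x ^ r) μ)
    (hne : ¬ (f =ᵐ[μ] (fun _ => 0))) :
    MonotoneOn
      (fun r : ℝ =>
        (∫ x, f x ^ r * Real.log (f x ^ r) ∂μ) / (∫ x, f x ^ r ∂μ)
          - Real.log (∫ x, f x ^ r ∂μ))
      (Set.Ioi (0 : ℝ)) := by
  have hΦ : (fun r : ℝ => (∫ x, f x ^ r * log (f x ^ r) ∂μ) / (∫ x, f x ^ r ∂μ)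
        - log (∫ x, f x ^ r ∂μ))
      = fun r => r * ((∫ x, f x ^ r * log (f x) ∂μ) / ∫ x, f x ^ r ∂μ)
        - log (∫ x, f x ^ r ∂μ) := by
    ext r
    simp_rw [rpow_mul_log_rpow (hf0 _), integral_const_mul, mul_div_assoc]
  rw [hΦ]
  refine monotoneOn_mul_sub_of_add_mul_le Ioi_subset_Ici_self fun s hs t ht => ?_
  have hft_log := integrable_rpow_mul_log (r := t) hfm.aemeasurable hf0 (half_pos ht)
    (hfLp _ (by linarith [mem_Ioi.1 ht])) (hfLp _ (by linarith [mem_Ioi.1 ht]))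
  exact log_integral_rpow_add_mul_le hf0 (ne_of_gt ht) (hfLp s hs) (hfLp t ht) hft_log
    (integral_rpow_pos hf0 (hfLp t ht) hne)

/-- If `f` is not `μ`-a.e. zero, the normalized entropy functional
`Φ(r) := (∫ f^r ln(f^r) dμ)/(∫ f^r dμ) − ln (∫ f^r dμ)` (with the convention `0 · ln 0 = 0`,
which holds automatically since `Real.log 0 = 0`) is nondecreasing in `r` on `(0, ∞)`. -/
theorem stmt5 {M : Type*} [MeasurableSpace M] (μ : Measure M) [SigmaFinite μ]
    (f : M → ℝ) (hfm : Measurable f) (hf0 : ∀ x, 0 ≤ f x)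
    (hfLp : ∀ r : ℝ, 0 < r → Integrable (fun x => f x ^ r) μ)
    (hne : ¬ (f =ᵐ[μ] (fun _ => 0))) :
    MonotoneOn
      (fun r : ℝ =>
        (∫ x, f x ^ r * Real.log (f x ^ r) ∂μ) / (∫ x, f x ^ r ∂μ)
          - Real.log (∫ x, f x ^ r ∂μ))
      (Set.Ioi (0 : ℝ)) :=
  stmt5_general μ f hfm hf0 hfLp hne
end

section
/- (Logarithmic Sobolev inequality implies multiplicative Sobolev inequality.) Let p ∈ (0, ∞), let β ∈ ℝ with β < 1/p (β plays the role of 1/q in the paper, allowing q negative or q = ∞), let C > 0 and w > 0, and suppose ‖f‖_p > 0. If the logarithmic Sobolev inequality ∫_M f^p ln(f^p/‖f‖_p^p) dμ ≤ (1/p − β)^{−1} ‖f‖_p^p ln(C w/‖f‖_p) holds, then for every s ∈ (0, p), setting θ := (1/s − 1/p)/(1/s − β) ∈ (0, 1), one has ‖f‖_p ≤ (C w)^θ ‖f‖_s^{1−θ}. -/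
/-!
Put `A = log ‖f‖_p`, `B = log ‖f‖_s` and let `e` be the entropy of `f^p` divided by `‖f‖_p^p`.
Gibbs' inequality `log y ≤ y - 1`, integrated against `f^p` with `y = f^(s-p) ‖f‖_p^p / ‖f‖_s^s`,
gives `A - B ≤ (1/s - 1/p) e`, while the logarithmic Sobolev inequality reads
`(1/p - β) e ≤ log (C w) - A`. Eliminating `e` leaves
`(1/s - β) A ≤ (1/s - 1/p) log (C w) + (1/p - β) B`, which exponentiates to the claim.
-/

open MeasureTheory Real

lemma mul_abs_log_le {t : ℝ} (ht : 0 ≤ t) : t * |log t| ≤ 2 * t ^ (1 / 2 : ℝ) + t ^ 2 := by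
  rcases ht.eq_or_lt with rfl | ht
  · simp
  rcases le_or_gt t 1 with h1 | h1
  · have h := abs_log_mul_self_rpow_lt t (1 / 2) ht h1 (by norm_num)
    have hsplit : t = t ^ (1 / 2 : ℝ) * t ^ (1 / 2 : ℝ) := by
      rw [← rpow_add ht]; norm_num
    calc t * |log t| = t ^ (1 / 2 : ℝ) * |log t * t ^ (1 / 2 : ℝ)| := by
          rw [abs_mul, abs_of_pos (rpow_pos_of_pos ht _)]
          nth_rw 1 [hsplit]; ring
      _ ≤ t ^ (1 / 2 : ℝ) * (1 / (1 / 2)) := by gcongr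
      _ ≤ 2 * t ^ (1 / 2 : ℝ) + t ^ 2 := by norm_num [sq_nonneg, mul_comm]
  · rw [abs_of_nonneg (log_nonneg h1.le)]
    nlinarith [log_le_sub_one_of_pos ht, rpow_nonneg ht.le (1 / 2 : ℝ)]

lemma abs_log_div_le (x y : ℝ) : |log (x / y)| ≤ |log x| + |log y| := by
  rcases eq_or_ne x 0 with rfl | hx
  · simp
  rcases eq_or_ne y 0 with rfl | hy
  · simp
  rw [log_div hx hy]; exact abs_sub _ _

lemma rpow_mul_log_rpow_div_le {t : ℝ} (ht : 0 ≤ t) {p : ℝ} (hp : 0 < p) (s : ℝ) {K L : ℝ}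
    (hK : 0 < K) (hL : 0 < L) :
    (s - p) / p * (t ^ p * log (t ^ p / K)) + (s / p * log K - log L) * t ^ p ≤
      K / L * t ^ s - t ^ p := by
  rcases ht.eq_or_lt with rfl | ht
  · simp only [zero_rpow hp.ne', zero_div, Real.log_zero, mul_zero, add_zero, sub_zero]
    positivity
  have hlog : log (t ^ p / K) = p * log t - log K := by
    rw [log_div (by positivity) hK.ne', log_rpow ht]
  have hpow : t ^ p * t ^ (s - p) = t ^ s := by rw [← rpow_add ht]; ring_nf
  -- Gibbs: `log y ≤ y - 1` at `y = t ^ (s - p) * K / L`, weighted by `t ^ p`.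
  have key := mul_le_mul_of_nonneg_left
    (log_le_sub_one_of_pos (by positivity : 0 < t ^ (s - p) * K / L)) (rpow_nonneg ht.le p)
  rw [log_div (by positivity) hL.ne', log_mul (by positivity) hK.ne', log_rpow ht] at key
  calc (s - p) / p * (t ^ p * log (t ^ p / K)) + (s / p * log K - log L) * t ^ p
      = t ^ p * ((s - p) * log t + log K - log L) := by rw [hlog]; field_simp; ring
    _ ≤ t ^ p * (t ^ (s - p) * K / L - 1) := key
    _ = K / L * t ^ s - t ^ p := by rw [← hpow]; ring

section
variable {M : Type*} [MeasurableSpace M] {μ : Measure M}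

lemma integrable_mul_log_div {g : M → ℝ} (hg : Measurable g) (hg0 : ∀ x, 0 ≤ g x)
    (hg_sqrt : Integrable (fun x => g x ^ (1 / 2 : ℝ)) μ) (hg_sq : Integrable (fun x => g x ^ 2) μ)
    (hg_int : Integrable g μ) (K : ℝ) :
    Integrable (fun x => g x * log (g x / K)) μ := by
  refine ((hg_sqrt.const_mul 2).add hg_sq |>.add (hg_int.mul_const |log K|)).mono'
    (by fun_prop) (.of_forall fun x => ?_)
  rw [norm_mul, Real.norm_of_nonneg (hg0 x), Real.norm_eq_abs]
  have := mul_le_mul_of_nonneg_left (abs_log_div_le (g x) K) (hg0 x)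
  simp only [Pi.add_apply]
  nlinarith [mul_abs_log_le (hg0 x)]

lemma integrable_rpow_mul_log_rpow_div {f : M → ℝ} (hf : Measurable f) (hf0 : ∀ x, 0 ≤ f x)
    (hfLp : ∀ r : ℝ, 0 < r → Integrable (fun x => f x ^ r) μ) {p : ℝ} (hp : 0 < p) (K : ℝ) :
    Integrable (fun x => f x ^ p * log (f x ^ p / K)) μ := by
  have hpow (r : ℝ) : (fun x => (f x ^ p) ^ r) = fun x => f x ^ (p * r) :=
    funext fun x => (rpow_mul (hf0 x) p r).symm
  refine integrable_mul_log_div (by fun_prop) (fun x => rpow_nonneg (hf0 x) p) ?_ ?_ (hfLp p hp) K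
  · rw [hpow]; exact hfLp _ (by positivity)
  · simp_rw [← Real.rpow_natCast, hpow]; exact hfLp _ (by positivity)

lemma integral_rpow_pos_of_integral_rpow_pos {f : M → ℝ} (hf0 : ∀ x, 0 ≤ f x) {p s : ℝ}
    (hp : p ≠ 0) (hs : s ≠ 0) (hfp : Integrable (fun x => f x ^ p) μ)
    (hfs : Integrable (fun x => f x ^ s) μ) (hN : 0 < ∫ x, f x ^ p ∂μ) :
    0 < ∫ x, f x ^ s ∂μ := by
  have hsupp {r : ℝ} (hr : r ≠ 0) : Function.support (fun x => f x ^ r) = Function.support f := by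
    ext x; simp [rpow_eq_zero (hf0 x) hr]
  rw [integral_pos_iff_support_of_nonneg (fun x => rpow_nonneg (hf0 x) p) hfp, hsupp hp] at hN
  rwa [integral_pos_iff_support_of_nonneg (fun x => rpow_nonneg (hf0 x) s) hfs, hsupp hs]

lemma log_integral_rpow_sub_le {f : M → ℝ} (hf0 : ∀ x, 0 ≤ f x) {p s : ℝ} (hp : 0 < p)
    (hs : 0 < s) (hfp : Integrable (fun x => f x ^ p) μ) (hfs : Integrable (fun x => f x ^ s) μ)
    (hent : Integrable (fun x => f x ^ p * log (f x ^ p / ∫ y, f y ^ p ∂μ)) μ)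
    (hN : 0 < ∫ x, f x ^ p ∂μ) (hS : 0 < ∫ x, f x ^ s ∂μ) :
    log ((∫ x, f x ^ p ∂μ) ^ (1 / p)) - log ((∫ x, f x ^ s ∂μ) ^ (1 / s)) ≤
      (1 / s - 1 / p) * ((∫ x, f x ^ p * log (f x ^ p / ∫ y, f y ^ p ∂μ) ∂μ) /
        ∫ x, f x ^ p ∂μ) := by
  have hint := integral_mono ((hent.const_mul _).add (hfp.const_mul _))
    ((hfs.const_mul _).sub hfp) fun x => rpow_mul_log_rpow_div_le (hf0 x) hp s hN hS
  simp only [Pi.add_apply, Pi.sub_apply, integral_add (hent.const_mul _) (hfp.const_mul _), integral_sub (hfs.const_mul _) hfp,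
    integral_const_mul] at hint
  set N := ∫ x, f x ^ p ∂μ
  set S := ∫ x, f x ^ s ∂μ
  set E := ∫ x, f x ^ p * log (f x ^ p / N) ∂μ
  have hJ : (s / p * log N - log S) * N ≤ (p - s) / p * E := by
    rw [div_mul_cancel₀ _ hS.ne'] at hint; linear_combination hint
  rw [log_rpow hN, log_rpow hS, mul_div_assoc', le_div_iff₀ hN]
  calc (1 / p * log N - 1 / s * log S) * N = 1 / s * ((s / p * log N - log S) * N) := by
        field_simp
    _ ≤ 1 / s * ((p - s) / p * E) := by gcongr
    _ = (1 / s - 1 / p) * E := by field_simp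
end

lemma le_interpolation_of_entropy_bounds {A B c e u v β : ℝ} (hβv : β < v) (hvu : v ≤ u)
    (hLSI : (v - β) * e ≤ c - A) (hJ : A - B ≤ (u - v) * e) :
    A ≤ (u - v) / (u - β) * c + (1 - (u - v) / (u - β)) * B := by
  have huβ : 0 < u - β := by linarith
  rw [← mul_le_mul_iff_right₀ huβ, mul_add, ← mul_assoc, ← mul_assoc, mul_div_cancel₀ _ huβ.ne',
    mul_one_sub, mul_div_cancel₀ _ huβ.ne']
  nlinarith [mul_le_mul_of_nonneg_left hJ (sub_nonneg.2 hβv.le),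
    mul_le_mul_of_nonneg_left hLSI (sub_nonneg.2 hvu)]

lemma le_rpow_mul_rpow_of_log_le {x y z a b : ℝ} (hx : 0 < x) (hy : 0 < y) (hz : 0 < z)
    (h : log x ≤ a * log y + b * log z) : x ≤ y ^ a * z ^ b := by
  rwa [← log_le_log_iff hx (by positivity), log_mul (by positivity) (by positivity),
    log_rpow hy, log_rpow hz]

theorem stmt6_general {M : Type*} [MeasurableSpace M] (μ : Measure M)
    (f : M → ℝ) (hfm : Measurable f) (hf0 : ∀ x, 0 ≤ f x)
    (hfLp : ∀ r : ℝ, 0 < r → Integrable (fun x => f x ^ r) μ)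
    (p β C w : ℝ) (hp : 0 < p) (hβ : β < 1 / p) (hC : 0 < C) (hw : 0 < w)
    (hfpos : 0 < (∫ x, f x ^ p ∂μ) ^ (1 / p))
    (hLSI : ∫ x, f x ^ p * Real.log (f x ^ p / ∫ y, f y ^ p ∂μ) ∂μ ≤
      (1 / p - β)⁻¹ * (∫ y, f y ^ p ∂μ) *
        Real.log (C * w / (∫ y, f y ^ p ∂μ) ^ (1 / p))) :
    ∀ s : ℝ, 0 < s → s < p →
      (∫ x, f x ^ p ∂μ) ^ (1 / p) ≤
        (C * w) ^ ((1 / s - 1 / p) / (1 / s - β)) *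
          ((∫ x, f x ^ s ∂μ) ^ (1 / s)) ^ (1 - (1 / s - 1 / p) / (1 / s - β)) := by
  intro s hs hsp
  have hN : 0 < ∫ x, f x ^ p ∂μ := by
    refine (integral_nonneg fun x => rpow_nonneg (hf0 x) p).lt_of_ne fun h => ?_
    rw [← h, zero_rpow (one_div_pos.2 hp).ne'] at hfpos
    exact hfpos.false
  have hS := integral_rpow_pos_of_integral_rpow_pos hf0 hp.ne' hs.ne' (hfLp p hp) (hfLp s hs) hN
  have hJensen := log_integral_rpow_sub_le hf0 hp hs (hfLp p hp) (hfLp s hs)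
    (integrable_rpow_mul_log_rpow_div hfm hf0 hfLp hp _) hN hS
  have hLSI' : (1 / p - β) * ((∫ x, f x ^ p * log (f x ^ p / ∫ y, f y ^ p ∂μ) ∂μ) /
      ∫ x, f x ^ p ∂μ) ≤ log (C * w) - log ((∫ x, f x ^ p ∂μ) ^ (1 / p)) := by
    rw [← log_div (by positivity) hfpos.ne', mul_div_assoc', div_le_iff₀ hN,
      ← le_inv_mul_iff₀ (sub_pos.2 hβ)]
    linarith
  exact le_rpow_mul_rpow_of_log_le hfpos (by positivity) (by positivity)
    (le_interpolation_of_entropy_bounds hβ (one_div_le_one_div_of_le hs hsp.le) hLSI' hJensen)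

/-- (Logarithmic Sobolev inequality implies multiplicative Sobolev
inequality.) Let `p ∈ (0, ∞)`, `β < 1/p` (`β` plays the role of `1/q`), `C > 0`, `w > 0`
(`w = W(f)`), and suppose `‖f‖_p > 0`.  If
`∫ f^p ln(f^p/‖f‖_p^p) dμ ≤ (1/p − β)⁻¹ ‖f‖_p^p ln(C w/‖f‖_p)`,
then for every `s ∈ (0, p)`, with `θ := (1/s − 1/p)/(1/s − β)`, one has
`‖f‖_p ≤ (C w)^θ ‖f‖_s^{1−θ}`, where `‖f‖_r := (∫ f^r dμ)^{1/r}`. -/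
theorem stmt6 {M : Type*} [MeasurableSpace M] (μ : Measure M) [SigmaFinite μ]
    (f : M → ℝ) (hfm : Measurable f) (hf0 : ∀ x, 0 ≤ f x)
    (hfLp : ∀ r : ℝ, 0 < r → Integrable (fun x => f x ^ r) μ)
    (p β C w : ℝ) (hp : 0 < p) (hβ : β < 1 / p) (hC : 0 < C) (hw : 0 < w)
    (hfpos : 0 < (∫ x, f x ^ p ∂μ) ^ (1 / p))
    (hLSI : ∫ x, f x ^ p * Real.log (f x ^ p / ∫ y, f y ^ p ∂μ) ∂μ ≤
      (1 / p - β)⁻¹ * (∫ y, f y ^ p ∂μ) *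
        Real.log (C * w / (∫ y, f y ^ p ∂μ) ^ (1 / p))) :
    ∀ s : ℝ, 0 < s → s < p →
      (∫ x, f x ^ p ∂μ) ^ (1 / p) ≤
        (C * w) ^ ((1 / s - 1 / p) / (1 / s - β)) *
          ((∫ x, f x ^ s ∂μ) ^ (1 / s)) ^ (1 - (1 / s - 1 / p) / (1 / s - β)) :=
  stmt6_general μ f hfm hf0 hfLp p β C w hp hβ hC hw hfpos hLSI
end

section
/- (Multiplicative Sobolev inequality implies logarithmic Sobolev inequality.) Let p ∈ (0, ∞), let β ∈ ℝ with β < 1/p (β plays the role of 1/q in the paper, allowing q negative or q = ∞), let C > 0 and w > 0, and suppose ‖f‖_p > 0. If for every s ∈ (0, p), with θ(s) := (1/s − 1/p)/(1/s − β), one has ‖f‖_p ≤ (C w)^{θ(s)} ‖f‖_s^{1−θ(s)}, then the logarithmic Sobolev inequality ∫_M f^p ln(f^p/‖f‖_p^p) dμ ≤ (1/p − β)^{−1} ‖f‖_p^p ln(C w/‖f‖_p) holds. -/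
open MeasureTheory ENNReal

private lemma rpow_le_add_of_mem {c a r b : ℝ} (hc : 0 < c) (har : a ≤ r) (hrb : r ≤ b) :
    c ^ r ≤ c ^ a + c ^ b := by
  rcases le_total c 1 with h | h
  · exact (Real.rpow_le_rpow_of_exponent_ge hc h har).trans
      (le_add_of_nonneg_right (Real.rpow_pos_of_pos hc b).le)
  · exact (Real.rpow_le_rpow_of_exponent_le h hrb).trans
      (le_add_of_nonneg_left (Real.rpow_pos_of_pos hc a).le)

private lemma abs_log_le_self_add_inv {y : ℝ} (hy : 0 < y) : |Real.log y| ≤ y + y⁻¹ := by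
  rw [abs_le]
  have h1 := Real.log_le_sub_one_of_pos hy
  have h2 := Real.log_le_sub_one_of_pos (inv_pos.mpr hy)
  rw [Real.log_inv] at h2
  have h3 : 0 < y⁻¹ := inv_pos.mpr hy
  constructor <;> linarith

private lemma abs_log_le_rpow {c a : ℝ} (hc : 0 < c) (ha : 0 < a) :
    |Real.log c| ≤ (c ^ a + c ^ (-a)) / a := by
  have h1 := abs_log_le_self_add_inv (Real.rpow_pos_of_pos hc a)
  rw [← Real.rpow_neg hc.le] at h1
  have h2 : |Real.log (c ^ a)| = a * |Real.log c| := by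
    rw [Real.log_rpow hc, abs_mul, abs_of_pos ha]
  rw [h2] at h1
  rw [le_div_iff₀ ha]
  linarith

/-- (Multiplicative Sobolev inequality implies logarithmic Sobolev
inequality.) Let `p ∈ (0, ∞)`, `β < 1/p` (`β` plays the role of `1/q`), `C > 0`, `w > 0`
(`w = W(f)`), and suppose `‖f‖_p > 0`.  If for every `s ∈ (0, p)`, with
`θ(s) := (1/s − 1/p)/(1/s − β)`, one has `‖f‖_p ≤ (C w)^{θ(s)} ‖f‖_s^{1−θ(s)}`, then
`∫ f^p ln(f^p/‖f‖_p^p) dμ ≤ (1/p − β)⁻¹ ‖f‖_p^p ln(C w/‖f‖_p)`,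
where `‖f‖_r := (∫ f^r dμ)^{1/r}`. -/
theorem stmt7 {M : Type*} [MeasurableSpace M] (μ : Measure M) [SigmaFinite μ]
    (f : M → ℝ) (hfm : Measurable f) (hf0 : ∀ x, 0 ≤ f x)
    (hfLp : ∀ r : ℝ, 0 < r → Integrable (fun x => f x ^ r) μ)
    (p β C w : ℝ) (hp : 0 < p) (hβ : β < 1 / p) (hC : 0 < C) (hw : 0 < w)
    (hfpos : 0 < (∫ x, f x ^ p ∂μ) ^ (1 / p))
    (hS : ∀ s : ℝ, 0 < s → s < p →
      (∫ x, f x ^ p ∂μ) ^ (1 / p) ≤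
        (C * w) ^ ((1 / s - 1 / p) / (1 / s - β)) *
          ((∫ x, f x ^ s ∂μ) ^ (1 / s)) ^ (1 - (1 / s - 1 / p) / (1 / s - β))) :
    ∫ x, f x ^ p * Real.log (f x ^ p / ∫ y, f y ^ p ∂μ) ∂μ ≤
      (1 / p - β)⁻¹ * (∫ y, f y ^ p ∂μ) *
        Real.log (C * w / (∫ y, f y ^ p ∂μ) ^ (1 / p)) := by
  have hCw : 0 < C * w := mul_pos hC hw
  -- positivity of ∫ f^p
  have hNp_pos : 0 < ∫ x, f x ^ p ∂μ := by
    rcases (integral_nonneg (f := fun x => f x ^ p) fun x => Real.rpow_nonneg (hf0 x) p).lt_or_eq with h | h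
    · exact h
    · rw [← h, Real.zero_rpow (one_div_ne_zero hp.ne')] at hfpos
      exact absurd hfpos (lt_irrefl 0)
  -- positivity of ∫ f^s for all s > 0
  have hN_pos : ∀ s : ℝ, 0 < s → 0 < ∫ x, f x ^ s ∂μ := by
    intro s hs
    rcases (integral_nonneg (f := fun x => f x ^ s) fun x => Real.rpow_nonneg (hf0 x) s).lt_or_eq with h | h
    · exact h
    · exfalso
      have h0 : (fun x => f x ^ s) =ᵐ[μ] 0 :=
        (integral_eq_zero_iff_of_nonneg (fun x => Real.rpow_nonneg (hf0 x) s)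
          (hfLp s hs)).mp h.symm
      have hf00 : f =ᵐ[μ] 0 := by
        filter_upwards [h0] with x hx
        have := (Real.rpow_eq_zero_iff_of_nonneg (hf0 x)).mp hx
        exact this.1
      have : (fun x => f x ^ p) =ᵐ[μ] 0 := by
        filter_upwards [hf00] with x hx
        simp [hx, Real.zero_rpow hp.ne']
      have := integral_eq_zero_of_ae this
      exact hNp_pos.ne' this
  -- bound function for differentiation under the integral
  set bound : M → ℝ := fun x =>
    (4 / p) * ((f x ^ (3 * p / 4) + f x ^ (7 * p / 4)) + (f x ^ (p / 4) + f x ^ (5 * p / 4)))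
    with hbound_def
  have hbound_int : Integrable bound μ :=
    ((((hfLp _ (by linarith)).add (hfLp _ (by linarith))).add
      ((hfLp _ (by linarith)).add (hfLp _ (by linarith)))).const_mul _)
  -- differentiation under the integral sign
  have hder := hasDerivAt_integral_of_dominated_loc_of_deriv_le
      (F := fun s x => f x ^ s) (F' := fun s x => f x ^ s * Real.log (f x))
      (x₀ := p) (bound := bound) (Metric.ball_mem_nhds p (half_pos hp))
      (by
        filter_upwards [eventually_gt_nhds hp] with s hs
        exact ((Real.continuous_rpow_const hs.le).measurable.comp hfm).aestronglyMeasurable)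
      (hfLp p hp)
      (((Real.continuous_rpow_const hp.le).measurable.comp hfm).mul
        (Real.measurable_log.comp hfm)).aestronglyMeasurable
      (Filter.Eventually.of_forall ?_) hbound_int
      (Filter.Eventually.of_forall ?_)
  rotate_left
  · -- the bound
    intro x s hs
    show ‖f x ^ s * Real.log (f x)‖ ≤ bound x
    rw [Metric.mem_ball, Real.dist_eq, abs_lt] at hs
    have hs1 : p / 2 < s := by linarith [hs.1]
    have hs2 : s < 3 * p / 2 := by linarith [hs.2]
    rcases (hf0 x).lt_or_eq with hfx | hfx
    · set c := f x
      have h1 : ‖c ^ s * Real.log c‖ = c ^ s * |Real.log c| := by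
        rw [norm_mul, Real.norm_eq_abs, Real.norm_eq_abs,
          abs_of_pos (Real.rpow_pos_of_pos hfx s)]
      have h2 : |Real.log c| ≤ (c ^ (p / 4) + c ^ (-(p / 4))) / (p / 4) :=
        abs_log_le_rpow hfx (by linarith)
      have h3 : c ^ s * |Real.log c| ≤
          (4 / p) * (c ^ (s + p / 4) + c ^ (s - p / 4)) := by
        have e1 : c ^ (s + p / 4) = c ^ s * c ^ (p / 4) := Real.rpow_add hfx _ _
        have e2 : c ^ (s - p / 4) = c ^ s * c ^ (-(p / 4)) := by
          rw [sub_eq_add_neg]; exact Real.rpow_add hfx _ _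
        have := mul_le_mul_of_nonneg_left h2 (Real.rpow_pos_of_pos hfx s).le
        calc c ^ s * |Real.log c| ≤ c ^ s * ((c ^ (p / 4) + c ^ (-(p / 4))) / (p / 4)) := this
          _ = (4 / p) * (c ^ (s + p / 4) + c ^ (s - p / 4)) := by
              rw [e1, e2]; field_simp
      have h4 : c ^ (s + p / 4) ≤ c ^ (3 * p / 4) + c ^ (7 * p / 4) :=
        rpow_le_add_of_mem hfx (by linarith) (by linarith)
      have h5 : c ^ (s - p / 4) ≤ c ^ (p / 4) + c ^ (5 * p / 4) :=
        rpow_le_add_of_mem hfx (by linarith) (by linarith)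
      rw [h1]
      refine h3.trans ?_
      rw [hbound_def]
      have h4p : (0:ℝ) ≤ 4 / p := by positivity
      exact mul_le_mul_of_nonneg_left (by linarith) h4p
    · rw [← hfx, Real.zero_rpow (by linarith : s ≠ 0)]
      simp only [zero_mul, norm_zero, hbound_def, ← hfx,
        Real.zero_rpow (by linarith : 3 * p / 4 ≠ 0),
        Real.zero_rpow (by linarith : 7 * p / 4 ≠ 0),
        Real.zero_rpow (by linarith : p / 4 ≠ 0),
        Real.zero_rpow (by linarith : 5 * p / 4 ≠ 0)]
      norm_num
  · -- differentiability
    intro x s hs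
    show HasDerivAt (fun t => f x ^ t) (f x ^ s * Real.log (f x)) s
    rw [Metric.mem_ball, Real.dist_eq, abs_lt] at hs
    have hs1 : 0 < s := by linarith [hs.1]
    rcases (hf0 x).lt_or_eq with hfx | hfx
    · exact (Real.hasStrictDerivAt_const_rpow hfx s).hasDerivAt
    · have hev : (fun t : ℝ => (0:ℝ)) =ᶠ[nhds s] fun t => f x ^ t := by
        filter_upwards [eventually_gt_nhds hs1] with t ht
        rw [← hfx, Real.zero_rpow ht.ne']
      have := (hasDerivAt_const s (0:ℝ)).congr_of_eventuallyEq hev.symm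
      simpa [← hfx, Real.log_zero] using this
  obtain ⟨hI_int, hN_deriv⟩ := hder
  set Np := ∫ x, f x ^ p ∂μ with hNp_def
  set I := ∫ x, f x ^ p * Real.log (f x) ∂μ with hI_def
  set L : ℝ → ℝ := fun s => Real.log (∫ x, f x ^ s ∂μ) with hL_def
  have hL_deriv : HasDerivAt L (I / Np) p := hN_deriv.log hNp_pos.ne'
  -- limits along 𝓝[<] p
  have hfilter : nhdsWithin p (Set.Iio p) ≤ nhdsWithin p {p}ᶜ :=
    nhdsWithin_mono p fun x hx => ne_of_lt hx
  have Tslope : Filter.Tendsto (fun s => (L s - L p) / (s - p))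
      (nhdsWithin p (Set.Iio p)) (nhds (I / Np)) := by
    have h := (hasDerivAt_iff_tendsto_slope.mp hL_deriv).mono_left hfilter
    refine h.congr fun s => ?_
    rw [slope_def_field]
  have TL : Filter.Tendsto L (nhdsWithin p (Set.Iio p)) (nhds (L p)) :=
    (hL_deriv.continuousAt.tendsto).mono_left nhdsWithin_le_nhds
  have Tid : Filter.Tendsto (fun s : ℝ => s) (nhdsWithin p (Set.Iio p)) (nhds p) :=
    Filter.tendsto_id.mono_left nhdsWithin_le_nhds
  have Tinv : Filter.Tendsto (fun s : ℝ => 1 / s - β)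
      (nhdsWithin p (Set.Iio p)) (nhds (1 / p - β)) :=
    (Filter.Tendsto.div tendsto_const_nhds Tid hp.ne').sub tendsto_const_nhds
  have Tlhs : Filter.Tendsto
      (fun s => (1 / s - β) * (s * ((L s - L p) / (s - p)) - L s))
      (nhdsWithin p (Set.Iio p)) (nhds ((1 / p - β) * (p * (I / Np) - L p))) :=
    Tinv.mul ((Tid.mul Tslope).sub TL)
  have Trhs : Filter.Tendsto (fun s => Real.log (C * w) - L s / s)
      (nhdsWithin p (Set.Iio p)) (nhds (Real.log (C * w) - L p / p)) :=
    tendsto_const_nhds.sub (TL.div Tid hp.ne')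
  -- the eventual inequality
  have hEv : ∀ᶠ s in nhdsWithin p (Set.Iio p),
      (1 / s - β) * (s * ((L s - L p) / (s - p)) - L s) ≤
        Real.log (C * w) - L s / s := by
    have h1 : ∀ᶠ s in nhdsWithin p (Set.Iio p), 0 < s :=
      eventually_nhdsWithin_of_eventually_nhds (eventually_gt_nhds hp)
    filter_upwards [h1, self_mem_nhdsWithin] with s hs0 hsp
    have hsp' : s < p := hsp
    have hu : 1 / p < 1 / s := one_div_lt_one_div_of_lt hs0 hsp'
    have hθnum : 0 < 1 / s - 1 / p := sub_pos.mpr hu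
    have hθden : 0 < 1 / s - β := sub_pos.mpr (hβ.trans hu)
    have hNs : 0 < ∫ x, f x ^ s ∂μ := hN_pos s hs0
    have hXs : 0 < (∫ x, f x ^ s ∂μ) ^ (1 / s) := Real.rpow_pos_of_pos hNs _
    set θ := (1 / s - 1 / p) / (1 / s - β) with hθ_def
    have hlog := Real.log_le_log hfpos (hS s hs0 hsp')
    rw [Real.log_mul (Real.rpow_pos_of_pos hCw θ).ne' (Real.rpow_pos_of_pos hXs _).ne',
      Real.log_rpow hCw, Real.log_rpow hXs, Real.log_rpow hNp_pos,
      Real.log_rpow hNs, ← hθ_def] at hlog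
    have hLs : L s = Real.log (∫ x, f x ^ s ∂μ) := rfl
    have hLp : L p = Real.log Np := rfl
    have hsne : s ≠ 0 := hs0.ne'
    have hpne : p ≠ 0 := hp.ne'
    have hspne : s - p ≠ 0 := sub_ne_zero.mpr hsp'.ne
    have hineq : 1 / p * L p - 1 / s * L s ≤ θ * (Real.log (C * w) - 1 / s * L s) := by
      rw [hLp, hLs]; linarith [hlog]
    have hid : (s * ((L s - L p) / (s - p)) - L s) * (1 / s - 1 / p)
        = 1 / p * L p - 1 / s * L s := by
      field_simp
      ring
    have hAθ : (1 / s - β) * θ = 1 / s - 1 / p := by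
      rw [hθ_def, mul_div_cancel₀ _ hθden.ne']
    have hmul := mul_le_mul_of_nonneg_left hineq hθden.le
    rw [← mul_assoc, hAθ] at hmul
    refine (mul_le_mul_iff_of_pos_right hθnum).mp ?_
    calc (1 / s - β) * (s * ((L s - L p) / (s - p)) - L s) * (1 / s - 1 / p)
        = (1 / s - β) * ((s * ((L s - L p) / (s - p)) - L s) * (1 / s - 1 / p)) := by ring
      _ = (1 / s - β) * (1 / p * L p - 1 / s * L s) := by rw [hid]
      _ ≤ (1 / s - 1 / p) * (Real.log (C * w) - 1 / s * L s) := hmul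
      _ = (Real.log (C * w) - L s / s) * (1 / s - 1 / p) := by ring
  -- pass to the limit
  have hfin : (1 / p - β) * (p * (I / Np) - L p) ≤ Real.log (C * w) - L p / p :=
    le_of_tendsto_of_tendsto Tlhs Trhs hEv
  have hβ' : 0 < 1 / p - β := sub_pos.mpr hβ
  -- rewrite the goal integral
  have hptwise : ∀ x, f x ^ p * Real.log (f x ^ p / Np) =
      p * (f x ^ p * Real.log (f x)) - L p * f x ^ p := by
    intro x
    rcases (hf0 x).lt_or_eq with hfx | hfx
    · rw [Real.log_div (Real.rpow_pos_of_pos hfx p).ne' hNp_pos.ne',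
        Real.log_rpow hfx]
      have : L p = Real.log Np := rfl
      rw [this]; ring
    · rw [← hfx, Real.zero_rpow hp.ne']
      ring
  have hgoal_int : ∫ x, f x ^ p * Real.log (f x ^ p / Np) ∂μ = p * I - L p * Np := by
    rw [show (fun x => f x ^ p * Real.log (f x ^ p / Np)) =
        fun x => p * (f x ^ p * Real.log (f x)) - L p * f x ^ p from funext hptwise]
    rw [integral_sub (hI_int.const_mul p) ((hfLp p hp).const_mul (L p)),
      integral_const_mul, integral_const_mul]
  have hlogr : Real.log (C * w / Np ^ (1 / p)) = Real.log (C * w) - 1 / p * L p := by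
    rw [Real.log_div hCw.ne' (Real.rpow_pos_of_pos hNp_pos _).ne',
      Real.log_rpow hNp_pos]
  have h2 : p * (I / Np) - L p ≤ (1 / p - β)⁻¹ * (Real.log (C * w) - L p / p) := by
    rw [inv_mul_eq_div, le_div_iff₀ hβ']
    nlinarith [hfin]
  calc ∫ x, f x ^ p * Real.log (f x ^ p / Np) ∂μ = p * I - L p * Np := hgoal_int
    _ = Np * (p * (I / Np) - L p) := by field_simp
    _ ≤ Np * ((1 / p - β)⁻¹ * (Real.log (C * w) - L p / p)) :=
        mul_le_mul_of_nonneg_left h2 hNp_pos.le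
    _ = (1 / p - β)⁻¹ * Np * (Real.log (C * w) - 1 / p * L p) := by ring
    _ = (1 / p - β)⁻¹ * Np * Real.log (C * w / Np ^ (1 / p)) := by rw [hlogr]
end

section
/- Let ρ > 1, let 0 < s < p < q < ∞ and θ ∈ (0, 1) satisfy 1/p = θ/q + (1 − θ)/s, let C > 0, let k ∈ ℤ, and let w_k ≥ 0. If the truncation f_{ρ,k} satisfies ‖f_{ρ,k}‖_p ≤ (C w_k)^θ ‖f_{ρ,k}‖_s^{1−θ}, then a_{f,q,k+1,ρ} ≤ ρ^q (ρ − 1)^{−pθ} (C w_k)^{pθ} · (a_{f,q,k,ρ})^{p(1−θ)/s}. -/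
open MeasureTheory ENNReal

/-!
Write `A = ρ^k` and `B = A(ρ - 1)`. The truncation `f_{ρ,k}` equals `B` on `{f ≥ ρ^{k+1}}`, never
exceeds `B`, and vanishes off `{f ≥ ρ^k}`, so `B^p μ{f ≥ ρ^{k+1}} ≤ ‖f_{ρ,k}‖_p^p` and
`‖f_{ρ,k}‖_s^s ≤ B^s μ{f ≥ ρ^k}`. Feeding both into the interpolation hypothesis and multiplying by
`ρ^{(k+1)q} / B^p` gives the claim; the powers of `ρ^k` match because the exponent relation is
equivalent to `q · p(1 - θ)/s = q - pθ`.
-/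

lemma min_max_sub_eq_of_add_le {a b t : ℝ} (h : a + b ≤ t) : min (max (t - a) 0) b = b :=
  min_eq_right (le_max_of_le_left (by linarith))

lemma min_max_sub_le_indicator {α : Type*} {a b : ℝ} (hb : 0 ≤ b) (f : α → ℝ) (x : α) :
    min (max (f x - a) 0) b ≤ {x | a ≤ f x}.indicator (fun _ => b) x := by
  by_cases hx : a ≤ f x
  · simp [hx]
  · simp [hx, max_eq_right (by linarith : f x - a ≤ 0), hb]

lemma rpow_le_indicator_rpow {α : Type*} {g : α → ℝ} {T : Set α} {b r : ℝ}
    (hg0 : ∀ x, 0 ≤ g x) (hgT : ∀ x, g x ≤ T.indicator (fun _ => b) x) (hr : 0 < r)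
    (x : α) : g x ^ r ≤ T.indicator (fun _ => b ^ r) x := by
  have hgx := hgT x
  by_cases hx : x ∈ T
  · rw [Set.indicator_of_mem hx] at hgx ⊢
    exact Real.rpow_le_rpow (hg0 x) hgx hr.le
  · rw [Set.indicator_of_notMem hx] at hgx ⊢
    rw [le_antisymm hgx (hg0 x), Real.zero_rpow hr.ne']

section LevelSets

variable {M : Type*} [MeasurableSpace M] {μ : Measure M} {g : M → ℝ} {S T : Set M} {b r : ℝ}

lemma mul_measureReal_le_integral (hS : MeasurableSet S) (hμS : μ S ≠ ∞) (hgS : ∀ x ∈ S, b ≤ g x)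
    (hg0 : ∀ x, 0 ≤ g x) (hint : Integrable g μ) : b * μ.real S ≤ ∫ x, g x ∂μ :=
  (setIntegral_ge_of_const_le_real hS hμS hgS hint.integrableOn).trans
    (setIntegral_le_integral hint (ae_of_all _ hg0))

lemma integrable_rpow_of_le_indicator (hg : Measurable g) (hT : MeasurableSet T) (hμT : μ T ≠ ∞)
    (hg0 : ∀ x, 0 ≤ g x) (hgT : ∀ x, g x ≤ T.indicator (fun _ => b) x) (hr : 0 < r) :
    Integrable (fun x => g x ^ r) μ :=
  ((integrable_indicator_iff hT).2 (integrableOn_const hμT) :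
      Integrable (T.indicator fun _ => b ^ r) μ).mono'
    (hg.pow_const r).aestronglyMeasurable
    (ae_of_all _ fun x => by
      rw [Real.norm_of_nonneg (Real.rpow_nonneg (hg0 x) r)]
      exact rpow_le_indicator_rpow hg0 hgT hr x)

lemma integral_rpow_le_of_le_indicator (hT : MeasurableSet T) (hμT : μ T ≠ ∞)
    (hg0 : ∀ x, 0 ≤ g x) (hgT : ∀ x, g x ≤ T.indicator (fun _ => b) x) (hr : 0 < r) :
    ∫ x, g x ^ r ∂μ ≤ b ^ r * μ.real T :=
  calc ∫ x, g x ^ r ∂μ ≤ ∫ x, T.indicator (fun _ => b ^ r) x ∂μ :=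
        integral_mono_of_nonneg (ae_of_all _ fun x => Real.rpow_nonneg (hg0 x) r)
          ((integrable_indicator_iff hT).2 (integrableOn_const hμT))
          (ae_of_all _ (rpow_le_indicator_rpow hg0 hgT hr))
    _ = b ^ r * μ.real T := by rw [integral_indicator_const _ hT, smul_eq_mul, mul_comm]

end LevelSets

section Truncation

variable {M : Type*} [MeasurableSpace M] {μ : Measure M} {f : M → ℝ} {a b c r : ℝ}

lemma rpow_mul_measureReal_le_integral_truncation_rpow (hf : Measurable f)
    (hμ : μ {x | a ≤ f x} ≠ ∞) (hb : 0 ≤ b) (habc : a + b ≤ c) (hr : 0 < r) :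
    b ^ r * μ.real {x | c ≤ f x} ≤ ∫ x, min (max (f x - a) 0) b ^ r ∂μ := by
  have hg0 : ∀ x, 0 ≤ min (max (f x - a) 0) b := fun x => le_min (le_max_right _ _) hb
  have hcf : {x | c ≤ f x} ⊆ {x | a ≤ f x} := fun x hx => by
    simp only [Set.mem_ofPred_eq] at hx ⊢; linarith
  refine mul_measureReal_le_integral (measurableSet_le measurable_const hf)
    (ne_top_of_le_ne_top hμ (measure_mono hcf))
    (fun x hx => (min_max_sub_eq_of_add_le (habc.trans hx)).symm ▸ le_rfl)
    (fun x => Real.rpow_nonneg (hg0 x) r) ?_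
  exact integrable_rpow_of_le_indicator (by fun_prop) (measurableSet_le measurable_const hf) hμ
    hg0 (min_max_sub_le_indicator hb f) hr

lemma integral_truncation_rpow_le (hf : Measurable f) (hμ : μ {x | a ≤ f x} ≠ ∞) (hb : 0 ≤ b)
    (hr : 0 < r) :
    ∫ x, min (max (f x - a) 0) b ^ r ∂μ ≤ b ^ r * μ.real {x | a ≤ f x} :=
  integral_rpow_le_of_le_indicator (measurableSet_le measurable_const hf) hμ
    (fun _ => le_min (le_max_right _ _) hb) (min_max_sub_le_indicator hb f) hr

end Truncation

lemma le_rpow_mul_rpow_of_rpow_one_div_le {I J Y p s θ : ℝ} (hI : 0 ≤ I) (hJ : 0 ≤ J) (hY : 0 ≤ Y)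
    (hp : 0 < p) (h : I ^ (1 / p) ≤ Y ^ θ * (J ^ (1 / s)) ^ (1 - θ)) :
    I ≤ Y ^ (p * θ) * J ^ (p * (1 - θ) / s) := by
  have := Real.rpow_le_rpow (Real.rpow_nonneg hI _) h hp.le
  rwa [← Real.rpow_mul hI, one_div_mul_cancel hp.ne', Real.rpow_one,
    Real.mul_rpow (by positivity) (by positivity), ← Real.rpow_mul hY, ← Real.rpow_mul hJ,
    ← Real.rpow_mul hJ, mul_comm θ, show 1 / s * (1 - θ) * p = p * (1 - θ) / s by ring] at this

lemma mul_div_eq_sub_of_one_div_eq {s p q θ : ℝ} (hp : p ≠ 0) (hq : q ≠ 0)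
    (h : 1 / p = θ / q + (1 - θ) / s) : q * (p * (1 - θ) / s) = q - p * θ :=
  calc q * (p * (1 - θ) / s) = q * p * ((1 - θ) / s) := by ring
    _ = q * p * (1 / p - θ / q) := by rw [h]; ring
    _ = q - p * θ := by field_simp

lemma rpow_mul_le_of_rpow_mul_le {A c ρ m₀ m₁ X p q s θ e : ℝ} (hA : 0 < A) (hc : 0 < c)
    (hρ : 0 ≤ ρ) (hm₀ : 0 ≤ m₀) (hse : s * e = p * (1 - θ)) (hqe : q * e = q - p * θ)
    (h : (A * c) ^ p * m₁ ≤ X * ((A * c) ^ s * m₀) ^ e) :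
    (A * ρ) ^ q * m₁ ≤ ρ ^ q * c ^ (-(p * θ)) * X * (A ^ q * m₀) ^ e := by
  have hm₁ : m₁ ≤ (A * c) ^ (-p) * (X * ((A * c) ^ s * m₀) ^ e) := by
    rwa [Real.rpow_neg (by positivity), ← div_eq_inv_mul, le_div_iff₀' (by positivity)]
  calc (A * ρ) ^ q * m₁ ≤ (A * ρ) ^ q * ((A * c) ^ (-p) * (X * ((A * c) ^ s * m₀) ^ e)) :=
        mul_le_mul_of_nonneg_left hm₁ (by positivity)
    _ = ρ ^ q * c ^ (-(p * θ)) * X * (A ^ q * m₀) ^ e := by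
        rw [Real.mul_rpow hA.le hρ, Real.mul_rpow (by positivity) hm₀,
          Real.mul_rpow (by positivity) hm₀, ← Real.rpow_mul (by positivity),
          ← Real.rpow_mul hA.le, hse, hqe, Real.mul_rpow hA.le hc.le, Real.mul_rpow hA.le hc.le,
          show q - p * θ = q + -p + p * (1 - θ) by ring, Real.rpow_add hA, Real.rpow_add hA,
          show -(p * θ) = -p + p * (1 - θ) by ring, Real.rpow_add hc]
        ring

lemma ofReal_mul_le_ofReal_mul_rpow_of_toReal {u v K e : ℝ} {m₀ m₁ : ℝ≥0∞} (hm₀ : m₀ ≠ ∞)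
    (hm₁ : m₁ ≠ ∞) (hu : 0 ≤ u) (hv : 0 ≤ v) (hK : 0 ≤ K) (he : 0 ≤ e)
    (h : u * m₁.toReal ≤ K * (v * m₀.toReal) ^ e) :
    ENNReal.ofReal u * m₁ ≤ ENNReal.ofReal K * (ENNReal.ofReal v * m₀) ^ e := by
  rw [← ofReal_toReal hm₀, ← ofReal_toReal hm₁, ← ofReal_mul hu, ← ofReal_mul hv,
    ofReal_rpow_of_nonneg (by positivity) he, ← ofReal_mul hK]
  exact ofReal_le_ofReal h

theorem stmt8_general {M : Type*} [MeasurableSpace M] (μ : Measure M)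
    (f : M → ℝ) (hfm : Measurable f)
    (hfLp : ∀ r : ℝ, 0 < r → Integrable (fun x => f x ^ r) μ)
    (ρ : ℝ) (hρ : 1 < ρ) (s p q θ C : ℝ)
    (hs : 0 < s) (hsp : s < p) (hpq : p < q)
    (hθ1 : θ < 1) (hrel : 1 / p = θ / q + (1 - θ) / s)
    (hC : 0 < C) (k : ℤ) (wk : ℝ) (hwk : 0 ≤ wk)
    (hSob : (∫ x, (min (max (f x - ρ ^ k) 0) (ρ ^ k * (ρ - 1))) ^ p ∂μ) ^ (1 / p) ≤
      (C * wk) ^ θ *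
        ((∫ x, (min (max (f x - ρ ^ k) 0) (ρ ^ k * (ρ - 1))) ^ s ∂μ) ^ (1 / s)) ^ (1 - θ)) :
    ENNReal.ofReal ((ρ ^ (k + 1) : ℝ) ^ q) * μ {x | ρ ^ (k + 1) ≤ f x} ≤
      ENNReal.ofReal (ρ ^ q * (ρ - 1) ^ (-(p * θ)) * (C * wk) ^ (p * θ)) *
        (ENNReal.ofReal ((ρ ^ k : ℝ) ^ q) * μ {x | ρ ^ k ≤ f x}) ^ (p * (1 - θ) / s) := by
  have hp : 0 < p := hs.trans hsp
  have hρ0 : 0 < ρ := by linarith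
  have hA : 0 < (ρ ^ k : ℝ) := zpow_pos hρ0 k
  have hB : 0 ≤ ρ ^ k * (ρ - 1) := mul_nonneg hA.le (by linarith)
  have hnext : (ρ ^ (k + 1) : ℝ) = ρ ^ k * ρ := zpow_add_one₀ hρ0.ne' k
  have hf : Integrable f μ := (hfLp 1 one_pos).congr (ae_of_all _ fun x => Real.rpow_one (f x))
  have hμ : μ {x | ρ ^ k ≤ f x} ≠ ∞ := (hf.measure_ge_lt_top hA).ne
  have hμ' : μ {x | ρ ^ (k + 1) ≤ f x} ≠ ∞ :=
    ne_top_of_le_ne_top hμ (measure_mono fun x hx => by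
      simp only [Set.mem_ofPred_eq, hnext] at hx ⊢; nlinarith)
  have lower := rpow_mul_measureReal_le_integral_truncation_rpow hfm hμ hB
    (by rw [hnext]; linarith) hp (c := ρ ^ (k + 1))
  have upper := integral_truncation_rpow_le hfm hμ hB hs
  have interpolation := le_rpow_mul_rpow_of_rpow_one_div_le (integral_nonneg fun _ => by positivity)
    (integral_nonneg fun _ => by positivity) (mul_nonneg hC.le hwk) hp hSob
  have he : 0 ≤ p * (1 - θ) / s := div_nonneg (mul_nonneg hp.le (by linarith)) hs.le
  have key := rpow_mul_le_of_rpow_mul_le (e := p * (1 - θ) / s) hA (by linarith) hρ0.le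
    measureReal_nonneg (mul_div_cancel₀ _ hs.ne')
    (mul_div_eq_sub_of_one_div_eq hp.ne' (hp.trans hpq).ne' hrel)
    (lower.trans (interpolation.trans (by gcongr)))
  rw [← hnext] at key
  exact ofReal_mul_le_ofReal_mul_rpow_of_toReal hμ hμ' (by positivity) (by positivity)
    (by positivity) he key

/-- Let `ρ > 1`, `0 < s < p < q < ∞` and `θ ∈ (0, 1)` with
`1/p = θ/q + (1 − θ)/s`, let `C > 0`, `k ∈ ℤ` and `w_k ≥ 0` (`w_k = W(f_{ρ,k})`).
If the truncation `f_{ρ,k} := min((f − ρ^k)⁺, ρ^k(ρ − 1))` satisfies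
`‖f_{ρ,k}‖_p ≤ (C w_k)^θ ‖f_{ρ,k}‖_s^{1−θ}`, then
`a_{f,q,k+1,ρ} ≤ ρ^q (ρ − 1)^{−pθ} (C w_k)^{pθ} (a_{f,q,k,ρ})^{p(1−θ)/s}`,
where `a_{f,q,k,ρ} := ρ^{qk} μ({f ≥ ρ^k})`. -/
theorem stmt8 {M : Type*} [MeasurableSpace M] (μ : Measure M) [SigmaFinite μ]
    (f : M → ℝ) (hfm : Measurable f) (hf0 : ∀ x, 0 ≤ f x)
    (hfLp : ∀ r : ℝ, 0 < r → Integrable (fun x => f x ^ r) μ)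
    (ρ : ℝ) (hρ : 1 < ρ) (s p q θ C : ℝ)
    (hs : 0 < s) (hsp : s < p) (hpq : p < q)
    (hθ0 : 0 < θ) (hθ1 : θ < 1) (hrel : 1 / p = θ / q + (1 - θ) / s)
    (hC : 0 < C) (k : ℤ) (wk : ℝ) (hwk : 0 ≤ wk)
    (hSob : (∫ x, (min (max (f x - ρ ^ k) 0) (ρ ^ k * (ρ - 1))) ^ p ∂μ) ^ (1 / p) ≤
      (C * wk) ^ θ *
        ((∫ x, (min (max (f x - ρ ^ k) 0) (ρ ^ k * (ρ - 1))) ^ s ∂μ) ^ (1 / s)) ^ (1 - θ)) :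
    ENNReal.ofReal ((ρ ^ (k + 1) : ℝ) ^ q) * μ {x | ρ ^ (k + 1) ≤ f x} ≤
      ENNReal.ofReal (ρ ^ q * (ρ - 1) ^ (-(p * θ)) * (C * wk) ^ (p * θ)) *
        (ENNReal.ofReal ((ρ ^ k : ℝ) ^ q) * μ {x | ρ ^ k ≤ f x}) ^ (p * (1 - θ) / s) :=
  stmt8_general μ f hfm hfLp ρ hρ s p q θ C hs hsp hpq hθ1 hrel hC k wk hwk hSob
end

section
/- Let ρ > 1, let 0 < s < p < q < ∞ and θ ∈ (0, 1) satisfy 1/p = θ/q + (1 − θ)/s, let C > 0, and let (w_k)_{k∈ℤ} be nonnegative real numbers. If for every k ∈ ℤ the truncation f_{ρ,k} satisfies ‖f_{ρ,k}‖_p ≤ (C w_k)^θ ‖f_{ρ,k}‖_s^{1−θ}, then Σ_{k∈ℤ} a_{f,q,k,ρ} ≤ ρ^{q(q−s)/(p−s)} (ρ − 1)^{−q} C^q · (Σ_{k∈ℤ} w_k^p)^{q/p}, the sums being taken in [0, ∞]. -/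
open MeasureTheory ENNReal

private lemma trunc_low {M : Type*} [MeasurableSpace M] (μ : Measure M) (g : M → ℝ)
    (c r : ℝ) (hr : 0 < r) (T : Set M) (hT : MeasurableSet T)
    (hg0 : ∀ x, 0 ≤ g x) (hgT : ∀ x ∈ T, g x = c)
    (hint : Integrable (fun x => g x ^ r) μ) :
    c ^ r * (μ T).toReal ≤ ∫ x, g x ^ r ∂μ := by
  have h1 : ∫ x in T, g x ^ r ∂μ = ∫ x in T, c ^ r ∂μ :=
    setIntegral_congr_fun hT (fun x hx => by rw [hgT x hx])
  have h2 : ∫ x in T, (c:ℝ) ^ r ∂μ = (μ T).toReal * c ^ r := by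
    rw [setIntegral_const, smul_eq_mul]; rfl
  have h3 : ∫ x in T, g x ^ r ∂μ ≤ ∫ x, g x ^ r ∂μ :=
    setIntegral_le_integral hint (ae_of_all _ fun x => Real.rpow_nonneg (hg0 x) r)
  rw [mul_comm]; rw [h1, h2] at h3; exact h3

private lemma trunc_up {M : Type*} [MeasurableSpace M] (μ : Measure M) (g : M → ℝ)
    (c r : ℝ) (hr : 0 < r) (T : Set M) (hT : MeasurableSet T) (hμT : μ T ≠ ⊤)
    (hg0 : ∀ x, 0 ≤ g x) (hgc : ∀ x, g x ≤ c) (hT0 : ∀ x ∉ T, g x = 0)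
    (hint : Integrable (fun x => g x ^ r) μ) :
    ∫ x, g x ^ r ∂μ ≤ c ^ r * (μ T).toReal := by
  have heq : ∀ x, g x ^ r = T.indicator (fun y => g y ^ r) x := by
    intro x
    by_cases hx : x ∈ T
    · rw [Set.indicator_of_mem hx]
    · rw [Set.indicator_of_notMem hx, hT0 x hx, Real.zero_rpow hr.ne']
  calc ∫ x, g x ^ r ∂μ = ∫ x, T.indicator (fun y => g y ^ r) x ∂μ :=
        integral_congr_ae (ae_of_all _ heq)
    _ = ∫ x in T, g x ^ r ∂μ := integral_indicator hT
    _ ≤ ∫ x in T, c ^ r ∂μ :=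
        setIntegral_mono_on hint.integrableOn
          (integrableOn_const hμT) hT
          (fun x _ => Real.rpow_le_rpow (hg0 x) (hgc x) hr.le)
    _ = (μ T).toReal * c ^ r := by rw [setIntegral_const, smul_eq_mul]; rfl
    _ = c ^ r * (μ T).toReal := mul_comm _ _

set_option maxHeartbeats 1000000 in
/-- Let `ρ > 1`, `0 < s < p < q < ∞` and `θ ∈ (0, 1)` with
`1/p = θ/q + (1 − θ)/s`, let `C > 0` and `(w_k)_{k∈ℤ}` nonnegative (`w_k = W(f_{ρ,k})`).
If for every `k ∈ ℤ` the truncation `f_{ρ,k} := min((f − ρ^k)⁺, ρ^k(ρ − 1))` satisfies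
`‖f_{ρ,k}‖_p ≤ (C w_k)^θ ‖f_{ρ,k}‖_s^{1−θ}`, then
`Σ_k a_{f,q,k,ρ} ≤ ρ^{q(q−s)/(p−s)} (ρ − 1)^{−q} C^q (Σ_k w_k^p)^{q/p}`,
the sums being taken in `[0, ∞]`, where `a_{f,q,k,ρ} := ρ^{qk} μ({f ≥ ρ^k})`. -/
theorem stmt9 {M : Type*} [MeasurableSpace M] (μ : Measure M) [SigmaFinite μ]
    (f : M → ℝ) (hfm : Measurable f) (hf0 : ∀ x, 0 ≤ f x)
    (hfLp : ∀ r : ℝ, 0 < r → Integrable (fun x => f x ^ r) μ)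
    (ρ : ℝ) (hρ : 1 < ρ) (s p q θ C : ℝ)
    (hs : 0 < s) (hsp : s < p) (hpq : p < q)
    (hθ0 : 0 < θ) (hθ1 : θ < 1) (hrel : 1 / p = θ / q + (1 - θ) / s)
    (hC : 0 < C) (w : ℤ → ℝ) (hw : ∀ k, 0 ≤ w k)
    (hSob : ∀ k : ℤ,
      (∫ x, (min (max (f x - ρ ^ k) 0) (ρ ^ k * (ρ - 1))) ^ p ∂μ) ^ (1 / p) ≤
        (C * w k) ^ θ *
          ((∫ x, (min (max (f x - ρ ^ k) 0) (ρ ^ k * (ρ - 1))) ^ s ∂μ) ^ (1 / s)) ^ (1 - θ)) :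
    (∑' k : ℤ, ENNReal.ofReal ((ρ ^ k : ℝ) ^ q) * μ {x | ρ ^ k ≤ f x}) ≤
      ENNReal.ofReal (ρ ^ (q * (q - s) / (p - s)) * (ρ - 1) ^ (-q) * C ^ q) *
        (∑' k : ℤ, ENNReal.ofReal (w k ^ p)) ^ (q / p) := by
  classical
  have hρ0 : (0:ℝ) < ρ := lt_trans one_pos hρ
  have hρ1 : (0:ℝ) < ρ - 1 := sub_pos.mpr hρ
  have hp : (0:ℝ) < p := hs.trans hsp
  have hq0 : (0:ℝ) < q := hp.trans hpq
  have hzk : ∀ k : ℤ, (0:ℝ) < ρ ^ k := fun k => zpow_pos hρ0 k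
  have h1θ : (0:ℝ) < 1 - θ := by linarith
  have hkey : θ * p * (q - s) = q * (p - s) := by
    field_simp at hrel; nlinarith [hrel]
  have hθp : (0:ℝ) < θ * p := mul_pos hθ0 hp
  set a : ℝ := (1 - θ) * p / s with ha_def
  have ha0 : 0 < a := by positivity
  have hqa : q * a = q - θ * p := by
    rw [ha_def]; field_simp; nlinarith [hkey]
  have ha1 : a < 1 := by nlinarith [hqa]
  set A : ℤ → ℝ≥0∞ := fun k => ENNReal.ofReal ((ρ ^ k : ℝ) ^ q) * μ {x | ρ ^ k ≤ f x}
    with hA_def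
  have hfr_nonneg : ∀ (r : ℝ) (x : M), (0:ℝ) ≤ f x ^ r := fun r x => Real.rpow_nonneg (hf0 x) r
  -- Chebyshev
  have cheb : ∀ (k : ℤ) (r : ℝ), 0 < r →
      ENNReal.ofReal ((ρ ^ k : ℝ) ^ r) * μ {x | ρ ^ k ≤ f x} ≤
        ENNReal.ofReal (∫ x, f x ^ r ∂μ) := by
    intro k r hr
    have hmeas : Measurable fun x => ENNReal.ofReal (f x ^ r) :=
      ENNReal.measurable_ofReal.comp ((Real.continuous_rpow_const hr.le).measurable.comp hfm)
    calc ENNReal.ofReal ((ρ ^ k : ℝ) ^ r) * μ {x | ρ ^ k ≤ f x}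
        ≤ ENNReal.ofReal ((ρ ^ k : ℝ) ^ r) *
            μ {x | ENNReal.ofReal ((ρ ^ k : ℝ) ^ r) ≤ ENNReal.ofReal (f x ^ r)} := by
          refine mul_le_mul_right (measure_mono fun x hx => ?_) _
          exact ENNReal.ofReal_le_ofReal (Real.rpow_le_rpow (hzk k).le hx hr.le)
      _ ≤ ∫⁻ x, ENNReal.ofReal (f x ^ r) ∂μ := mul_meas_ge_le_lintegral₀ hmeas.aemeasurable _
      _ = ENNReal.ofReal (∫ x, f x ^ r ∂μ) :=
          (ofReal_integral_eq_lintegral_ofReal (hfLp r hr)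
            (ae_of_all _ fun x => hfr_nonneg r x)).symm
  have hmfin : ∀ k : ℤ, μ {x | ρ ^ k ≤ f x} ≠ ⊤ := by
    intro k hcon
    have h := cheb k s hs
    rw [hcon, ENNReal.mul_top
      (ne_of_gt (ENNReal.ofReal_pos.mpr (Real.rpow_pos_of_pos (hzk k) s)))] at h
    exact ENNReal.ofReal_ne_top (top_le_iff.mp h)
  -- geometric bound on A
  have hAle : ∀ (k : ℤ) (r : ℝ), 0 < r →
      A k ≤ ENNReal.ofReal ((ρ ^ k : ℝ) ^ (q - r)) * ENNReal.ofReal (∫ x, f x ^ r ∂μ) := by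
    intro k r hr
    have e : A k = ENNReal.ofReal ((ρ ^ k : ℝ) ^ (q - r)) *
        (ENNReal.ofReal ((ρ ^ k : ℝ) ^ r) * μ {x | ρ ^ k ≤ f x}) := by
      rw [hA_def, ← mul_assoc, ← ENNReal.ofReal_mul (Real.rpow_nonneg (hzk k).le _),
        ← Real.rpow_add (hzk k)]
      norm_num
    rw [e]
    exact mul_le_mul_right (cheb k r hr) _
  -- finiteness of S
  have hSfin : (∑' k : ℤ, A k) ≠ ⊤ := by
    have hsplit : (∑' k : ℤ, A k) = (∑' n : ℕ, A n) + ∑' n : ℕ, A (-(n + 1)) :=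
      tsum_of_nat_of_neg_add_one ENNReal.summable ENNReal.summable
    rw [hsplit]
    refine ENNReal.add_ne_top.mpr ⟨?_, ?_⟩
    · have hb : ∀ n : ℕ, A (n:ℤ) ≤
          ENNReal.ofReal ρ⁻¹ ^ n * ENNReal.ofReal (∫ x, f x ^ (q + 1) ∂μ) := by
        intro n
        refine (hAle n (q + 1) (by linarith)).trans_eq ?_
        congr 1
        rw [← ENNReal.ofReal_pow (by positivity)]
        congr 1
        rw [show q - (q + 1) = (-1 : ℝ) by ring]
        rw [Real.rpow_neg_one, zpow_natCast, ← inv_pow]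
      refine ne_top_of_le_ne_top ?_ (ENNReal.tsum_le_tsum hb)
      rw [ENNReal.tsum_mul_right, ENNReal.tsum_geometric]
      refine ENNReal.mul_ne_top (ENNReal.inv_ne_top.mpr ?_) ENNReal.ofReal_ne_top
      exact (tsub_pos_of_lt (ENNReal.ofReal_lt_one.mpr (inv_lt_one_of_one_lt₀ hρ))).ne'
    · have hd1 : ρ ^ (s - q) < 1 := Real.rpow_lt_one_of_one_lt_of_neg hρ (by linarith)
      have hb : ∀ n : ℕ, A (-(n + 1 : ℕ) : ℤ) ≤
          ENNReal.ofReal (ρ ^ (s - q)) ^ (n + 1) * ENNReal.ofReal (∫ x, f x ^ s ∂μ) := by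
        intro n
        refine (hAle _ s hs).trans_eq ?_
        congr 1
        rw [← ENNReal.ofReal_pow (by positivity)]
        congr 1
        rw [← Real.rpow_natCast (ρ ^ (s - q)) (n + 1), ← Real.rpow_intCast ρ (-(n + 1 : ℕ)),
          ← Real.rpow_mul hρ0.le, ← Real.rpow_mul hρ0.le]
        congr 1
        push_cast
        ring
      refine ne_top_of_le_ne_top ?_ (ENNReal.tsum_le_tsum hb)
      rw [ENNReal.tsum_mul_right, ENNReal.tsum_geometric_add_one]
      refine ENNReal.mul_ne_top (ENNReal.mul_ne_top ENNReal.ofReal_ne_top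
        (ENNReal.inv_ne_top.mpr ?_)) ENNReal.ofReal_ne_top
      exact (tsub_pos_of_lt (ENNReal.ofReal_lt_one.mpr hd1)).ne'
  -- the recursion
  set K : ℝ≥0∞ := ENNReal.ofReal (ρ ^ q * (ρ - 1) ^ (-(θ * p))) with hK_def
  set u : ℤ → ℝ≥0∞ := fun k => ENNReal.ofReal ((C * w k) ^ (θ * p)) with hu_def
  have hrec : ∀ k : ℤ, A (k + 1) ≤ K * (u k * A k ^ a) := by
    intro k
    have h3 := hSob k
    have hCw : (0:ℝ) ≤ C * w k := mul_nonneg hC.le (hw k)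
    set c : ℝ := ρ ^ k * (ρ - 1) with hc_def
    have hc : (0:ℝ) < c := mul_pos (hzk k) hρ1
    clear_value c
    have hg0 : ∀ x, 0 ≤ min (max (f x - ρ ^ k) 0) c := fun x => le_min (le_max_right _ _) hc.le
    have hgle : ∀ x, min (max (f x - ρ ^ k) 0) c ≤ f x := fun x =>
      (min_le_left _ _).trans (max_le (by linarith [hzk k]) (hf0 x))
    have hgmeas : Measurable fun x => min (max (f x - ρ ^ k) 0) c :=
      ((hfm.sub measurable_const).max measurable_const).min measurable_const
    have hint : ∀ r : ℝ, 0 < r → Integrable (fun x => (min (max (f x - ρ ^ k) 0) c) ^ r) μ := by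
      intro r hr
      refine (hfLp r hr).mono'
        ((Real.continuous_rpow_const hr.le).measurable.comp hgmeas).aestronglyMeasurable
        (ae_of_all _ fun x => ?_)
      rw [Real.norm_eq_abs, abs_of_nonneg (Real.rpow_nonneg (hg0 x) r)]
      exact Real.rpow_le_rpow (hg0 x) (hgle x) hr.le
    have hTmeas : ∀ j : ℤ, MeasurableSet {x | ρ ^ j ≤ f x} := fun j =>
      measurableSet_le measurable_const hfm
    set M1 : ℝ := (μ {x | ρ ^ (k + 1) ≤ f x}).toReal with hM1_def
    set M0 : ℝ := (μ {x | ρ ^ k ≤ f x}).toReal with hM0_def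
    have hM1nn : 0 ≤ M1 := ENNReal.toReal_nonneg
    have hM0nn : 0 ≤ M0 := ENNReal.toReal_nonneg
    have hlow : c ^ p * M1 ≤ ∫ x, (min (max (f x - ρ ^ k) 0) c) ^ p ∂μ := by
      refine trunc_low μ _ c p hp _ (hTmeas (k + 1)) hg0 (fun x hx => ?_) (hint p hp)
      have hfx : ρ ^ (k + 1) ≤ f x := hx
      have hsub : c ≤ f x - ρ ^ k := by
        rw [hc_def]
        have e := zpow_add_one₀ hρ0.ne' k
        nlinarith [hzk k]
      rw [max_eq_left (le_trans hc.le hsub)]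
      exact min_eq_right hsub
    have hup : ∫ x, (min (max (f x - ρ ^ k) 0) c) ^ s ∂μ ≤ c ^ s * M0 := by
      refine trunc_up μ _ c s hs _ (hTmeas k) (hmfin k) hg0 (fun x => min_le_right _ _)
        (fun x hx => ?_) (hint s hs)
      have hfx : f x < ρ ^ k := not_le.mp hx
      rw [max_eq_right (by linarith), min_eq_left hc.le]
    have hIs0 : 0 ≤ ∫ x, (min (max (f x - ρ ^ k) 0) c) ^ s ∂μ :=
      integral_nonneg fun x => Real.rpow_nonneg (hg0 x) s
    have h1 : c * M1 ^ (1 / p) ≤ (∫ x, (min (max (f x - ρ ^ k) 0) c) ^ p ∂μ) ^ (1 / p) := by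
      have e : c * M1 ^ (1 / p) = (c ^ p * M1) ^ (1 / p) := by
        rw [Real.mul_rpow (by positivity) hM1nn, ← Real.rpow_mul hc.le,
          mul_one_div_cancel hp.ne', Real.rpow_one]
      rw [e]
      exact Real.rpow_le_rpow (by positivity) hlow (by positivity)
    have h2 : ((∫ x, (min (max (f x - ρ ^ k) 0) c) ^ s ∂μ) ^ (1 / s)) ^ (1 - θ) ≤
        (c * M0 ^ (1 / s)) ^ (1 - θ) := by
      refine Real.rpow_le_rpow (Real.rpow_nonneg hIs0 _) ?_ (by linarith)
      have e : c * M0 ^ (1 / s) = (c ^ s * M0) ^ (1 / s) := by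
        rw [Real.mul_rpow (by positivity) hM0nn, ← Real.rpow_mul hc.le,
          mul_one_div_cancel hs.ne', Real.rpow_one]
      rw [e]
      exact Real.rpow_le_rpow hIs0 hup (by positivity)
    have hchain : c * M1 ^ (1 / p) ≤ (C * w k) ^ θ * (c * M0 ^ (1 / s)) ^ (1 - θ) :=
      h1.trans (h3.trans (mul_le_mul_of_nonneg_left h2 (Real.rpow_nonneg hCw θ)))
    have hM : M1 ≤ (C * w k) ^ (θ * p) * (c ^ (-(θ * p)) * M0 ^ a) := by
      have hstep : M1 ^ (1 / p) ≤ (C * w k) ^ θ * (c ^ (-θ) * M0 ^ ((1 - θ) / s)) := by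
        have hexp : (c * M0 ^ (1 / s)) ^ (1 - θ) = (c ^ (-θ) * M0 ^ ((1 - θ) / s)) * c := by
          rw [Real.mul_rpow hc.le (Real.rpow_nonneg hM0nn _), ← Real.rpow_mul hM0nn,
            show (1:ℝ) - θ = -θ + 1 by ring, Real.rpow_add hc, Real.rpow_one,
            show 1 / s * (-θ + 1) = (1 - θ) / s by ring]
          ring
        rw [hexp] at hchain
        have hchain' : M1 ^ (1 / p) * c ≤
            (C * w k) ^ θ * (c ^ (-θ) * M0 ^ ((1 - θ) / s)) * c := by
          rw [mul_comm (M1 ^ (1 / p)) c, mul_assoc]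
          exact hchain
        exact le_of_mul_le_mul_right hchain' hc
      calc M1 = (M1 ^ (1 / p)) ^ p := by
            rw [← Real.rpow_mul hM1nn, one_div_mul_cancel hp.ne', Real.rpow_one]
        _ ≤ ((C * w k) ^ θ * (c ^ (-θ) * M0 ^ ((1 - θ) / s))) ^ p :=
            Real.rpow_le_rpow (Real.rpow_nonneg hM1nn _) hstep hp.le
        _ = (C * w k) ^ (θ * p) * (c ^ (-(θ * p)) * M0 ^ a) := by
            rw [Real.mul_rpow (Real.rpow_nonneg hCw _)
                (mul_nonneg (Real.rpow_nonneg hc.le _) (Real.rpow_nonneg hM0nn _)),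
              Real.mul_rpow (Real.rpow_nonneg hc.le _) (Real.rpow_nonneg hM0nn _),
              ← Real.rpow_mul hCw, ← Real.rpow_mul hc.le, ← Real.rpow_mul hM0nn,
              show -θ * p = -(θ * p) by ring, show (1 - θ) / s * p = (1 - θ) * p / s by ring,
              ha_def]
    have hμ1 : μ {x | ρ ^ (k + 1) ≤ f x} = ENNReal.ofReal M1 :=
      (ENNReal.ofReal_toReal (hmfin (k + 1))).symm
    have hμ0 : μ {x | ρ ^ k ≤ f x} = ENNReal.ofReal M0 :=
      (ENNReal.ofReal_toReal (hmfin k)).symm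
    have hAk : A k = ENNReal.ofReal ((ρ ^ k : ℝ) ^ q * M0) := by
      show ENNReal.ofReal ((ρ ^ k : ℝ) ^ q) * μ {x | ρ ^ k ≤ f x} = _
      rw [hμ0, ← ENNReal.ofReal_mul (Real.rpow_nonneg (hzk k).le q)]
    have hreal : ((ρ:ℝ) ^ (k + 1)) ^ q * ((C * w k) ^ (θ * p) * (c ^ (-(θ * p)) * M0 ^ a)) =
        (ρ ^ q * (ρ - 1) ^ (-(θ * p))) * ((C * w k) ^ (θ * p) * ((ρ ^ k : ℝ) ^ q * M0) ^ a) := by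
      have e1 : ((ρ:ℝ) ^ (k + 1)) ^ q = (ρ ^ k : ℝ) ^ q * ρ ^ q := by
        rw [zpow_add_one₀ hρ0.ne', Real.mul_rpow (hzk k).le hρ0.le]
      have e2 : c ^ (-(θ * p)) = (ρ ^ k : ℝ) ^ (-(θ * p)) * (ρ - 1) ^ (-(θ * p)) := by
        rw [hc_def, Real.mul_rpow (hzk k).le hρ1.le]
      have e3 : ((ρ ^ k : ℝ) ^ q * M0) ^ a = ((ρ ^ k : ℝ) ^ q) ^ a * M0 ^ a :=
        Real.mul_rpow (Real.rpow_nonneg (hzk k).le q) hM0nn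
      have e4 : ((ρ ^ k : ℝ) ^ q) ^ a = (ρ ^ k : ℝ) ^ q * (ρ ^ k : ℝ) ^ (-(θ * p)) := by
        rw [← Real.rpow_mul (hzk k).le, ← Real.rpow_add (hzk k),
          show q * a = q + -(θ * p) by linarith [hqa]]
      rw [e1, e2, e3, e4]; ring
    calc A (k + 1) = ENNReal.ofReal (((ρ:ℝ) ^ (k + 1)) ^ q * M1) := by
          show ENNReal.ofReal ((ρ ^ (k + 1) : ℝ) ^ q) * μ {x | ρ ^ (k + 1) ≤ f x} = _
          rw [hμ1, ← ENNReal.ofReal_mul (Real.rpow_nonneg (hzk (k + 1)).le q)]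
      _ ≤ ENNReal.ofReal (((ρ:ℝ) ^ (k + 1)) ^ q *
            ((C * w k) ^ (θ * p) * (c ^ (-(θ * p)) * M0 ^ a))) :=
          ENNReal.ofReal_le_ofReal
            (mul_le_mul_of_nonneg_left hM (Real.rpow_nonneg (hzk (k + 1)).le q))
      _ = K * (u k * A k ^ a) := by
          rw [hreal, hK_def, hu_def, hAk,
            ENNReal.ofReal_rpow_of_nonneg (by positivity) ha0.le,
            ← ENNReal.ofReal_mul (Real.rpow_nonneg hCw _),
            ← ENNReal.ofReal_mul (by positivity)]
  -- summation
  set S : ℝ≥0∞ := ∑' k : ℤ, A k with hS_def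
  set W : ℝ≥0∞ := ∑' k : ℤ, ENNReal.ofReal (w k ^ p) with hW_def
  by_cases hS0 : S = 0
  · simp [hS0]
  by_cases hW : W = ⊤
  · have : ENNReal.ofReal (ρ ^ (q * (q - s) / (p - s)) * (ρ - 1) ^ (-q) * C ^ q) *
        W ^ (q / p) = ⊤ := by
      rw [hW, ENNReal.top_rpow_of_pos (by positivity), ENNReal.mul_top
        (ne_of_gt (ENNReal.ofReal_pos.mpr (by positivity)))]
    rw [this]
    exact le_top
  -- Hölder
  have holder : (∑' k : ℤ, u k * A k ^ a) ≤
      (∑' k : ℤ, u k ^ (1 / θ)) ^ θ * (∑' k : ℤ, (A k ^ a) ^ (1 / (1 - θ))) ^ (1 - θ) := by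
    have hconj : (1 / θ).HolderConjugate (1 / (1 - θ)) :=
      Real.holderConjugate_one_div hθ0 h1θ (by ring)
    have h := ENNReal.lintegral_mul_le_Lp_mul_Lq (Measure.count : Measure ℤ) hconj
      (f := u) (g := fun k => A k ^ a)
      (measurable_of_countable _).aemeasurable (measurable_of_countable _).aemeasurable
    simpa [lintegral_count, one_div_one_div] using h
  have hsum_u : (∑' k : ℤ, u k ^ (1 / θ)) = ENNReal.ofReal (C ^ p) * W := by
    have e : ∀ k : ℤ, u k ^ (1 / θ) =
        ENNReal.ofReal (C ^ p) * ENNReal.ofReal (w k ^ p) := by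
      intro k
      have hCw : (0:ℝ) ≤ C * w k := mul_nonneg hC.le (hw k)
      rw [hu_def, ENNReal.ofReal_rpow_of_nonneg (Real.rpow_nonneg hCw _) (by positivity),
        ← Real.rpow_mul hCw, show θ * p * (1 / θ) = p by field_simp,
        Real.mul_rpow hC.le (hw k), ENNReal.ofReal_mul (by positivity)]
    rw [tsum_congr e, ENNReal.tsum_mul_left, hW_def]
  have hsum_A : (∑' k : ℤ, (A k ^ a) ^ (1 / (1 - θ))) ≤ S ^ (p / s) := by
    have hps1 : (0:ℝ) ≤ p / s - 1 := by
      rw [sub_nonneg, le_div_iff₀ hs]; linarith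
    have e : ∀ k : ℤ, (A k ^ a) ^ (1 / (1 - θ)) = A k ^ (p / s) := by
      intro k
      rw [← ENNReal.rpow_mul]
      congr 1
      rw [ha_def]; field_simp
    have hSsplit : ∀ x : ℝ≥0∞, x ^ (p / s) = x ^ (p / s - 1) * x := by
      intro x
      have h := ENNReal.rpow_add_of_nonneg (x := x) (p / s - 1) 1 hps1 zero_le_one
      rw [ENNReal.rpow_one, show p / s - 1 + 1 = p / s by ring] at h
      exact h
    calc (∑' k : ℤ, (A k ^ a) ^ (1 / (1 - θ))) = ∑' k : ℤ, A k ^ (p / s) := tsum_congr e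
      _ ≤ ∑' k : ℤ, S ^ (p / s - 1) * A k := by
          refine ENNReal.tsum_le_tsum fun k => ?_
          calc A k ^ (p / s) = A k ^ (p / s - 1) * A k := hSsplit (A k)
            _ ≤ S ^ (p / s - 1) * A k :=
                mul_le_mul_left (ENNReal.rpow_le_rpow (ENNReal.le_tsum k) hps1) _
      _ = S ^ (p / s - 1) * S := by rw [ENNReal.tsum_mul_left, ← hS_def]
      _ = S ^ (p / s) := (hSsplit S).symm
  have hmain : S ≤ K * ((ENNReal.ofReal (C ^ p) * W) ^ θ * (S ^ (p / s)) ^ (1 - θ)) := by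
    have hshift : S = ∑' k : ℤ, A (k + 1) := by
      have h := (Equiv.addRight (1 : ℤ)).tsum_eq A
      simp only [Equiv.coe_addRight] at h
      rw [hS_def, ← h]
    calc S = ∑' k : ℤ, A (k + 1) := hshift
      _ ≤ ∑' k : ℤ, K * (u k * A k ^ a) := ENNReal.tsum_le_tsum hrec
      _ = K * ∑' k : ℤ, u k * A k ^ a := ENNReal.tsum_mul_left
      _ ≤ K * ((∑' k : ℤ, u k ^ (1 / θ)) ^ θ *
            (∑' k : ℤ, (A k ^ a) ^ (1 / (1 - θ))) ^ (1 - θ)) := mul_le_mul_right holder _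
      _ ≤ K * ((ENNReal.ofReal (C ^ p) * W) ^ θ * (S ^ (p / s)) ^ (1 - θ)) := by
          rw [hsum_u]
          exact mul_le_mul_right
            (mul_le_mul_right (ENNReal.rpow_le_rpow hsum_A h1θ.le) _) _
  set T : ℝ≥0∞ := K * (ENNReal.ofReal (C ^ p) * W) ^ θ with hT_def
  have hTne : T ≠ ⊤ :=
    ENNReal.mul_ne_top ENNReal.ofReal_ne_top
      (ENNReal.rpow_ne_top_of_nonneg hθ0.le (ENNReal.mul_ne_top ENNReal.ofReal_ne_top hW))
  have hmain2 : S ≤ T * S ^ a := by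
    have e : (S ^ (p / s)) ^ (1 - θ) = S ^ a := by
      rw [← ENNReal.rpow_mul]
      congr 1
      rw [ha_def]; ring
    calc S ≤ K * ((ENNReal.ofReal (C ^ p) * W) ^ θ * (S ^ (p / s)) ^ (1 - θ)) := hmain
      _ = T * S ^ a := by rw [e, hT_def, mul_assoc]
  have h5 : S ^ ((1:ℝ) - a) ≤ T := by
    have e1 : S ^ ((1:ℝ) - a) = S * S ^ (-a) := by
      rw [show (1:ℝ) - a = 1 + -a by ring, ENNReal.rpow_add _ _ hS0 hSfin, ENNReal.rpow_one]
    have e2 : T * S ^ a * S ^ (-a) = T := by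
      rw [mul_assoc, ← ENNReal.rpow_add _ _ hS0 hSfin]
      simp
    rw [e1, ← e2]
    exact mul_le_mul_left hmain2 _
  have h1a : (0:ℝ) < 1 - a := by linarith
  have h1aeq : (1:ℝ) - a = θ * p / q := by
    field_simp
    nlinarith [hqa]
  have h6 : S ≤ T ^ (q / (θ * p)) := by
    have e : (S ^ ((1:ℝ) - a)) ^ (1 / (1 - a)) = S := by
      rw [← ENNReal.rpow_mul, mul_one_div_cancel h1a.ne', ENNReal.rpow_one]
    have h7 := ENNReal.rpow_le_rpow h5 (le_of_lt (by positivity : (0:ℝ) < 1 / (1 - a)))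
    rw [e] at h7
    have e2 : (1:ℝ) / (1 - a) = q / (θ * p) := by
      rw [h1aeq, one_div_div]
    rw [e2] at h7
    exact h7
  have hfinal : T ^ (q / (θ * p)) =
      ENNReal.ofReal (ρ ^ (q * (q - s) / (p - s)) * (ρ - 1) ^ (-q) * C ^ q) * W ^ (q / p) := by
    have hqp : (0:ℝ) < q / (θ * p) := by positivity
    rw [hT_def, ENNReal.mul_rpow_of_ne_top ENNReal.ofReal_ne_top
      (ENNReal.rpow_ne_top_of_nonneg hθ0.le (ENNReal.mul_ne_top ENNReal.ofReal_ne_top hW))]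
    have hK2 : (ENNReal.ofReal (ρ ^ q * (ρ - 1) ^ (-(θ * p)))) ^ (q / (θ * p)) =
        ENNReal.ofReal (ρ ^ (q * (q - s) / (p - s)) * (ρ - 1) ^ (-q)) := by
      rw [ENNReal.ofReal_rpow_of_nonneg (by positivity) hqp.le]
      congr 1
      rw [Real.mul_rpow (by positivity) (by positivity), ← Real.rpow_mul hρ0.le,
        ← Real.rpow_mul hρ1.le]
      have hps' : (0:ℝ) < p - s := by linarith
      have hdiv : q / (θ * p) = (q - s) / (p - s) := by
        rw [div_eq_div_iff hθp.ne' hps'.ne']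
        linear_combination -hkey
      rw [show q * (q / (θ * p)) = q * (q - s) / (p - s) by rw [hdiv, mul_div_assoc],
          show -(θ * p) * (q / (θ * p)) = -q by field_simp]
    have hCW : ((ENNReal.ofReal (C ^ p) * W) ^ θ) ^ (q / (θ * p)) =
        ENNReal.ofReal (C ^ q) * W ^ (q / p) := by
      rw [← ENNReal.rpow_mul, ENNReal.mul_rpow_of_ne_top ENNReal.ofReal_ne_top hW,
        ENNReal.ofReal_rpow_of_nonneg (by positivity) (by positivity),
        ← Real.rpow_mul hC.le,
        show p * (θ * (q / (θ * p))) = q by field_simp,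
        show θ * (q / (θ * p)) = q / p by field_simp]
    rw [hK2, hCW, ← mul_assoc, ← ENNReal.ofReal_mul (by positivity)]
  rw [hfinal] at h6
  exact h6
end

section
/- (Iteration lemma.) Let ρ > 1, let 0 < s < p < q < ∞ and θ ∈ (0, 1) satisfy 1/p = θ/q + (1 − θ)/s, let C > 0, A > 0, w ≥ 0, and let (w_k)_{k∈ℤ} be nonnegative real numbers. Assume: (i) for every k ∈ ℤ the truncation f_{ρ,k} satisfies ‖f_{ρ,k}‖_p ≤ (C w_k)^θ ‖f_{ρ,k}‖_s^{1−θ}; and (ii) Σ_{k∈ℤ} w_k^p ≤ (A w)^p. Then ‖f‖_q ≤ (ρ^q − 1)^{1/q} · ρ^{(q−s)/(p−s)} · (C A/(ρ − 1)) · w. -/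
/-!
Put `E_k = {f > ρ^k}`, `X_k = ρ^{qk} μ(E_k)`, `β = (p - s)/(q - s) = θp/q` and
`c_k = (C w_k/(ρ - 1))^q`. The truncation `f_{ρ,k}` equals `ρ^k(ρ - 1)` on `E_{k+1}` and vanishes
off `E_k`, so (i) turns into `X_{k+1} ≤ ρ^q c_k^β X_k^{1-β}`. Summing over `k` and applying Hölder
gives `∑ X ≤ ρ^q (∑ c)^β (∑ X)^{1-β}`. A dyadic layer-cake decomposition shows that `∑ X` is
comparable to `‖f‖_q^q`, precisely `‖f‖_q^q ≤ (ρ^q - 1) ∑ X ≤ ρ^q ‖f‖_q^q`; in particular `∑ X` is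
finite and can be cancelled, leaving `∑ X ≤ ρ^{q/β} ∑ c`. Finally `∑ c ≤ (C A w/(ρ - 1))^q` by
(ii) and `ℓ^p ⊆ ℓ^q`.
-/

open MeasureTheory ENNReal

namespace ENNReal

variable {ι : Type*}

theorem tsum_rpow_le_rpow_tsum (x : ι → ℝ≥0∞) {r : ℝ} (hr : 1 ≤ r) :
    ∑' i, x i ^ r ≤ (∑' i, x i) ^ r := by
  have hsplit : ∀ y : ℝ≥0∞, y ^ r = y * y ^ (r - 1) := fun y => by
    conv_lhs => rw [← add_sub_cancel 1 r]
    rw [rpow_add_of_nonneg _ _ zero_le_one (sub_nonneg.2 hr), rpow_one]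
  calc ∑' i, x i ^ r ≤ ∑' i, x i * (∑' j, x j) ^ (r - 1) := by
        gcongr with i
        rw [hsplit]
        gcongr
        exact ENNReal.le_tsum i
    _ = (∑' i, x i) ^ r := by rw [ENNReal.tsum_mul_right, ← hsplit]

theorem tsum_rpow_mul_rpow_le (x y : ι → ℝ≥0∞) {a b : ℝ} (ha : 0 ≤ a) (hb : 0 ≤ b)
    (hab : a + b = 1) :
    ∑' i, x i ^ a * y i ^ b ≤ (∑' i, x i) ^ a * (∑' i, y i) ^ b := by
  let _ : MeasurableSpace ι := ⊤
  simpa only [lintegral_count] using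
    lintegral_mul_norm_pow_le (μ := (Measure.count : Measure ι)) (f := x) (g := y)
      Measurable.of_discrete.aemeasurable Measurable.of_discrete.aemeasurable ha hb hab

/-- Hölder bounds `∑ x = ∑ x (k + 1)` by `K (∑ c) ^ β (∑ x) ^ (1 - β)`, and the finite sum `∑ x`
can then be cancelled. -/
theorem tsum_le_rpow_inv_mul_tsum_of_succ_le {x c : ℤ → ℝ≥0∞} {K : ℝ≥0∞} {β : ℝ}
    (hβ0 : 0 < β) (hβ1 : β ≤ 1) (hx : ∑' k, x k ≠ ∞)
    (hrec : ∀ k, x (k + 1) ≤ K * c k ^ β * x k ^ (1 - β)) :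
    ∑' k, x k ≤ K ^ β⁻¹ * ∑' k, c k := by
  set S := ∑' k, x k
  have hS : S ≤ K * (∑' k, c k) ^ β * S ^ (1 - β) :=
    calc S = ∑' k, x (k + 1) := ((Equiv.addRight (1 : ℤ)).tsum_eq x).symm
      _ ≤ ∑' k, K * (c k ^ β * x k ^ (1 - β)) :=
          ENNReal.tsum_le_tsum fun k => (hrec k).trans_eq (mul_assoc _ _ _)
      _ ≤ K * ((∑' k, c k) ^ β * S ^ (1 - β)) := by
          rw [ENNReal.tsum_mul_left]
          gcongr
          exact tsum_rpow_mul_rpow_le c x hβ0.le (sub_nonneg.2 hβ1) (add_sub_cancel _ _)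
      _ = K * (∑' k, c k) ^ β * S ^ (1 - β) := (mul_assoc _ _ _).symm
  rcases eq_or_ne S 0 with hS0 | hS0
  · simp [hS0]
  have hSβ : S ^ β ≤ K * (∑' k, c k) ^ β := by
    rw [← ENNReal.mul_le_mul_iff_left (rpow_pos (pos_iff_ne_zero.2 hS0) hx).ne'
      (rpow_ne_top_of_nonneg (sub_nonneg.2 hβ1) hx), ← rpow_add _ _ hS0 hx, add_sub_cancel,
      rpow_one]
    exact hS
  calc S = (S ^ β) ^ β⁻¹ := by rw [← rpow_mul, mul_inv_cancel₀ hβ0.ne', rpow_one]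
    _ ≤ (K * (∑' k, c k) ^ β) ^ β⁻¹ := by gcongr
    _ = K ^ β⁻¹ * ∑' k, c k := by
        rw [mul_rpow_of_nonneg _ _ (inv_nonneg.2 hβ0.le), ← rpow_mul, mul_inv_cancel₀ hβ0.ne',
          rpow_one]

end ENNReal

theorem tsum_ofReal_mul_rpow_le {ι : Type*} {v : ι → ℝ} {c V p q : ℝ} (hv : ∀ i, 0 ≤ v i)
    (hc : 0 ≤ c) (hV : 0 ≤ V) (hp : 0 < p) (hpq : p ≤ q)
    (h : ∑' i, ENNReal.ofReal (v i ^ p) ≤ ENNReal.ofReal (V ^ p)) :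
    ∑' i, ENNReal.ofReal ((c * v i) ^ q) ≤ ENNReal.ofReal ((c * V) ^ q) := by
  have hqp : 0 ≤ q / p := div_nonneg (hp.le.trans hpq) hp.le
  have hpow : ∀ {x : ℝ}, 0 ≤ x →
      ENNReal.ofReal ((c * x) ^ q) = ENNReal.ofReal (c ^ q) * ENNReal.ofReal (x ^ p) ^ (q / p) :=
    fun hx => by
      rw [ENNReal.ofReal_rpow_of_nonneg (Real.rpow_nonneg hx p) hqp,
        ← Real.rpow_mul hx, mul_div_cancel₀ _ hp.ne', ← ENNReal.ofReal_mul (by positivity),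
        Real.mul_rpow hc hx]
  rw [tsum_congr fun i => hpow (hv i), ENNReal.tsum_mul_left, hpow hV]
  gcongr
  exact (ENNReal.tsum_rpow_le_rpow_tsum _ ((one_le_div hp).2 hpq)).trans (by gcongr)

theorem hasSum_ite_le_zpow {r : ℝ} (hr : 1 < r) (n : ℤ) :
    HasSum (fun k : ℤ => if k ≤ n then r ^ k else 0) (r ^ (n + 1) / (r - 1)) := by
  have hr0 : 0 < r := one_pos.trans hr
  have hinj : Function.Injective fun j : ℕ => n - j := fun i j h => by simpa using h
  rw [← hinj.hasSum_iff]
  · have hterm : ((fun k : ℤ => if k ≤ n then r ^ k else 0) ∘ fun j : ℕ => n - j)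
        = fun j => r ^ n * r⁻¹ ^ j := by
      funext j
      simp [zpow_sub₀ hr0.ne', div_eq_mul_inv]
    have hval : r ^ (n + 1) / (r - 1) = r ^ n * (1 - r⁻¹)⁻¹ := by
      rw [zpow_add_one₀ hr0.ne']
      field_simp
    rw [hterm, hval]
    exact (hasSum_geometric_of_lt_one (inv_nonneg.2 hr0.le) (inv_lt_one_of_one_lt₀ hr)).mul_left _
  · rintro k hk
    rw [if_neg]
    rintro hkn
    exact hk ⟨(n - k).toNat, by simp [Int.toNat_of_nonneg (sub_nonneg.2 hkn)]⟩

noncomputable def levelSum (ρ q t : ℝ) : ℝ≥0∞ :=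
  ∑' k : ℤ, (if ρ ^ k < t then ENNReal.ofReal ((ρ ^ q) ^ k) else 0)

section LevelSums

variable {ρ q t : ℝ}

theorem ofReal_sub_one_mul_levelSum {n : ℤ} (hρ : 1 < ρ) (hq : 0 < q)
    (ht : t ∈ Set.Ioc (ρ ^ n) (ρ ^ (n + 1))) :
    ENNReal.ofReal (ρ ^ q - 1) * levelSum ρ q t = ENNReal.ofReal ((ρ ^ (n + 1)) ^ q) := by
  have hρ0 : 0 < ρ := one_pos.trans hρ
  have hr : 1 < ρ ^ q := Real.one_lt_rpow hρ hq
  have hlt : ∀ k : ℤ, ρ ^ k < t ↔ k ≤ n := fun k =>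
    ⟨fun h => by
      by_contra! hnk
      exact (h.trans_le ht.2).not_ge (zpow_le_zpow_right₀ hρ.le hnk),
     fun h => (zpow_le_zpow_right₀ hρ.le h).trans_lt ht.1⟩
  have hsum := hasSum_ite_le_zpow hr n
  have hnn : ∀ k : ℤ, 0 ≤ if k ≤ n then (ρ ^ q) ^ k else 0 := fun k => by
    split_ifs <;> positivity
  simp_rw [levelSum, hlt, ← ENNReal.ofReal_zero, ← apply_ite ENNReal.ofReal]
  rw [← ENNReal.ofReal_tsum_of_nonneg hnn hsum.summable, hsum.tsum_eq,
    ← ENNReal.ofReal_mul (sub_nonneg.2 hr.le), mul_div_cancel₀ _ (sub_pos.2 hr).ne',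
    Real.rpow_zpow_comm hρ0.le]

theorem ofReal_rpow_le_sub_one_mul_levelSum (hρ : 1 < ρ) (hq : 0 < q) (ht : 0 ≤ t) :
    ENNReal.ofReal (t ^ q) ≤ ENNReal.ofReal (ρ ^ q - 1) * levelSum ρ q t := by
  rcases ht.eq_or_lt with rfl | ht
  · simp [Real.zero_rpow hq.ne']
  obtain ⟨n, hn⟩ := exists_mem_Ioc_zpow ht hρ
  rw [ofReal_sub_one_mul_levelSum hρ hq hn]
  exact ENNReal.ofReal_le_ofReal (Real.rpow_le_rpow ht.le hn.2 hq.le)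

theorem sub_one_mul_levelSum_le (hρ : 1 < ρ) (hq : 0 < q) (ht : 0 ≤ t) :
    ENNReal.ofReal (ρ ^ q - 1) * levelSum ρ q t ≤
      ENNReal.ofReal (ρ ^ q) * ENNReal.ofReal (t ^ q) := by
  have hρ0 : 0 < ρ := one_pos.trans hρ
  rcases ht.eq_or_lt with rfl | ht
  · simp [levelSum, fun k : ℤ => (zpow_pos hρ0 k).not_gt]
  obtain ⟨n, hn⟩ := exists_mem_Ioc_zpow ht hρ
  rw [ofReal_sub_one_mul_levelSum hρ hq hn, ← ENNReal.ofReal_mul (by positivity),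
    zpow_add_one₀ hρ0.ne', Real.mul_rpow (by positivity) hρ0.le, mul_comm]
  gcongr
  exact hn.1.le

end LevelSums

theorem le_div_rpow_mul_rpow_of_mul_rpow_le {m u x y p s θ : ℝ} (hm : 0 < m) (hu : 0 ≤ u)
    (hx : 0 ≤ x) (hy : 0 ≤ y) (hp : 0 < p)
    (h : m * x ^ (1 / p) ≤ u ^ θ * (m * y ^ (1 / s)) ^ (1 - θ)) :
    x ≤ (u / m) ^ (θ * p) * y ^ ((1 - θ) * p / s) := by
  have hroot : x ^ (1 / p) ≤ (u / m) ^ θ * y ^ ((1 - θ) / s) := by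
    refine le_of_mul_le_mul_left (h.trans_eq ?_) hm
    rw [Real.mul_rpow hm.le (by positivity), ← Real.rpow_mul hy, Real.div_rpow hu hm.le,
      Real.rpow_sub hm, Real.rpow_one]
    field_simp
  calc x = (x ^ (1 / p)) ^ p := by rw [← Real.rpow_mul hx, one_div_mul_cancel hp.ne', Real.rpow_one]
    _ ≤ ((u / m) ^ θ * y ^ ((1 - θ) / s)) ^ p := by gcongr
    _ = (u / m) ^ (θ * p) * y ^ ((1 - θ) * p / s) := by
      rw [Real.mul_rpow (by positivity) (by positivity), ← Real.rpow_mul (by positivity),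
        ← Real.rpow_mul hy, div_mul_eq_mul_div]

/-- `truncLevel (ρ ^ k) (ρ ^ k * (ρ - 1)) ∘ f` is the truncation `f_{ρ,k}`. -/
noncomputable def truncLevel (a b t : ℝ) : ℝ := min (max (t - a) 0) b

section Truncation

variable {M : Type*} {g : M → ℝ} {a b p : ℝ}

theorem truncLevel_nonneg (hb : 0 ≤ b) (t : ℝ) : 0 ≤ truncLevel a b t :=
  le_min (le_max_right _ _) hb

theorem truncLevel_rpow_le_indicator (hb : 0 ≤ b) (hp : 0 < p) (x : M) :
    truncLevel a b (g x) ^ p ≤ {x | a < g x}.indicator (fun _ => b ^ p) x := by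
  by_cases hx : a < g x
  · rw [Set.indicator_of_mem (s := {x | a < g x}) hx]
    exact Real.rpow_le_rpow (truncLevel_nonneg hb _) (min_le_right _ _) hp.le
  · rw [Set.indicator_of_notMem (s := {x | a < g x}) hx, truncLevel,
      max_eq_right (by linarith [not_lt.1 hx]), min_eq_left hb, Real.zero_rpow hp.ne']

theorem indicator_le_truncLevel_rpow (hb : 0 ≤ b) (x : M) :
    {x | a + b < g x}.indicator (fun _ => b ^ p) x ≤ truncLevel a b (g x) ^ p := by
  by_cases hx : a + b < g x
  · rw [Set.indicator_of_mem (s := {x | a + b < g x}) hx, truncLevel,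
      min_eq_right (le_max_of_le_left (by linarith))]
  · rw [Set.indicator_of_notMem (s := {x | a + b < g x}) hx]
    exact Real.rpow_nonneg (truncLevel_nonneg hb _) p

variable [MeasurableSpace M] {μ : Measure M}

theorem integrable_truncLevel_rpow (hg : Measurable g) (hb : 0 ≤ b) (hp : 0 < p)
    (hfin : μ {x | a < g x} ≠ ∞) : Integrable (fun x => truncLevel a b (g x) ^ p) μ := by
  have hs : MeasurableSet {x | a < g x} := measurableSet_lt measurable_const hg
  have hmeas : Measurable fun x => truncLevel a b (g x) :=
    ((hg.sub measurable_const).max measurable_const).min measurable_const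
  refine ((integrable_indicator_iff hs).2 (integrableOn_const (C := b ^ p) hfin)).mono'
    (hmeas.pow_const p).aestronglyMeasurable (ae_of_all _ fun x => ?_)
  rw [Real.norm_of_nonneg (Real.rpow_nonneg (truncLevel_nonneg hb _) p)]
  exact truncLevel_rpow_le_indicator hb hp x

theorem integral_truncLevel_rpow_le (hg : Measurable g) (hb : 0 ≤ b) (hp : 0 < p)
    (hfin : μ {x | a < g x} ≠ ∞) :
    ∫ x, truncLevel a b (g x) ^ p ∂μ ≤ b ^ p * μ.real {x | a < g x} := by
  have hs : MeasurableSet {x | a < g x} := measurableSet_lt measurable_const hg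
  rw [mul_comm, ← smul_eq_mul, ← integral_indicator_const _ hs]
  exact integral_mono_of_nonneg (ae_of_all _ fun x => Real.rpow_nonneg (truncLevel_nonneg hb _) p)
    ((integrable_indicator_iff hs).2 (integrableOn_const (C := b ^ p) hfin))
    (ae_of_all _ (truncLevel_rpow_le_indicator hb hp))

theorem mul_measureReal_lt_le_integral_truncLevel_rpow (hg : Measurable g) (hb : 0 ≤ b)
    (hp : 0 < p) (hfin : μ {x | a < g x} ≠ ∞) :
    b ^ p * μ.real {x | a + b < g x} ≤ ∫ x, truncLevel a b (g x) ^ p ∂μ := by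
  rw [mul_comm, ← smul_eq_mul, ← integral_indicator_const _ (measurableSet_lt measurable_const hg)]
  exact integral_mono_of_nonneg
    (ae_of_all _ fun x => Set.indicator_nonneg (fun _ _ => by positivity) x)
    (integrable_truncLevel_rpow hg hb hp hfin) (ae_of_all _ (indicator_le_truncLevel_rpow hb))

theorem measureReal_lt_le_of_interpolation {u s θ : ℝ} (hg : Measurable g) (hb : 0 < b)
    (hu : 0 ≤ u) (hp : 0 < p) (hs : 0 < s) (hθ : θ ≤ 1) (hfin : μ {x | a < g x} ≠ ∞)
    (h : (∫ x, truncLevel a b (g x) ^ p ∂μ) ^ (1 / p) ≤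
      u ^ θ * ((∫ x, truncLevel a b (g x) ^ s ∂μ) ^ (1 / s)) ^ (1 - θ)) :
    μ.real {x | a + b < g x} ≤ (u / b) ^ (θ * p) * μ.real {x | a < g x} ^ ((1 - θ) * p / s) := by
  have hroot : ∀ {r y : ℝ}, 0 < r → 0 ≤ y → (b ^ r * y) ^ (1 / r) = b * y ^ (1 / r) :=
    fun hr hy => by
      rw [Real.mul_rpow (by positivity) hy, ← Real.rpow_mul hb.le, mul_one_div_cancel hr.ne',
        Real.rpow_one]
  have hIs : 0 ≤ ∫ x, truncLevel a b (g x) ^ s ∂μ :=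
    integral_nonneg fun x => Real.rpow_nonneg (truncLevel_nonneg hb.le _) s
  have hlower : b * μ.real {x | a + b < g x} ^ (1 / p) ≤
      (∫ x, truncLevel a b (g x) ^ p ∂μ) ^ (1 / p) := by
    rw [← hroot hp measureReal_nonneg]
    gcongr
    exact mul_measureReal_lt_le_integral_truncLevel_rpow hg hb.le hp hfin
  have hupper : (∫ x, truncLevel a b (g x) ^ s ∂μ) ^ (1 / s) ≤
      b * μ.real {x | a < g x} ^ (1 / s) := by
    rw [← hroot hs measureReal_nonneg]
    exact Real.rpow_le_rpow hIs (integral_truncLevel_rpow_le hg hb.le hs hfin) (by positivity)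
  refine le_div_rpow_mul_rpow_of_mul_rpow_le hb hu measureReal_nonneg measureReal_nonneg hp
    (hlower.trans (h.trans ?_))
  exact mul_le_mul_of_nonneg_left
    (Real.rpow_le_rpow (Real.rpow_nonneg hIs _) hupper (sub_nonneg.2 hθ)) (by positivity)

end Truncation

theorem zpow_succ_mul_le_of_le {ρ q β v y y' : ℝ} {k : ℤ} (hρ : 0 < ρ) (hv : 0 ≤ v) (hy : 0 ≤ y)
    (h : y' ≤ (v / ρ ^ k) ^ (q * β) * y ^ (1 - β)) :
    (ρ ^ q) ^ (k + 1) * y' ≤ ρ ^ q * (v ^ q) ^ β * ((ρ ^ q) ^ k * y) ^ (1 - β) := by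
  have hR : 0 < (ρ ^ q) ^ k := zpow_pos (Real.rpow_pos_of_pos hρ q) k
  have hcoef : (v / ρ ^ k) ^ (q * β) = (v ^ q) ^ β / ((ρ ^ q) ^ k) ^ β := by
    rw [Real.rpow_mul (div_nonneg hv (zpow_pos hρ k).le), Real.div_rpow hv (zpow_pos hρ k).le,
      ← Real.rpow_zpow_comm hρ.le, Real.div_rpow (by positivity) hR.le]
  rw [hcoef] at h
  rw [zpow_add_one₀ (Real.rpow_pos_of_pos hρ q).ne', Real.mul_rpow hR.le hy, Real.rpow_sub hR,
    Real.rpow_one]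
  calc (ρ ^ q) ^ k * ρ ^ q * y'
      ≤ (ρ ^ q) ^ k * ρ ^ q * ((v ^ q) ^ β / ((ρ ^ q) ^ k) ^ β * y ^ (1 - β)) := by gcongr
    _ = _ := by ring

section LevelMass

variable {M : Type*} [MeasurableSpace M] {μ : Measure M} {f : M → ℝ} {ρ q : ℝ}

noncomputable def levelMass (μ : Measure M) (f : M → ℝ) (ρ q : ℝ) (k : ℤ) : ℝ≥0∞ :=
  ENNReal.ofReal ((ρ ^ q) ^ k) * μ {x | ρ ^ k < f x}

theorem tsum_levelMass_eq_lintegral_levelSum (hf : Measurable f) :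
    ∑' k, levelMass μ f ρ q k = ∫⁻ x, levelSum ρ q (f x) ∂μ := by
  have hmeas : ∀ k : ℤ, MeasurableSet {x | ρ ^ k < f x} := fun k =>
    measurableSet_lt measurable_const hf
  unfold levelSum
  rw [lintegral_tsum fun k =>
    (Measurable.ite (hmeas k) measurable_const measurable_const).aemeasurable]
  refine tsum_congr fun k => ?_
  simp only [levelMass, ← lintegral_indicator_const (hmeas k), Set.indicator_apply,
    Set.mem_ofPred_eq]

theorem lintegral_rpow_le_mul_tsum_levelMass (hf : Measurable f) (hf0 : ∀ x, 0 ≤ f x)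
    (hρ : 1 < ρ) (hq : 0 < q) :
    ∫⁻ x, ENNReal.ofReal (f x ^ q) ∂μ ≤ ENNReal.ofReal (ρ ^ q - 1) * ∑' k, levelMass μ f ρ q k := by
  rw [tsum_levelMass_eq_lintegral_levelSum hf, ← lintegral_const_mul' _ _ ENNReal.ofReal_ne_top]
  exact lintegral_mono fun x => ofReal_rpow_le_sub_one_mul_levelSum hρ hq (hf0 x)

theorem tsum_levelMass_ne_top (hf : Measurable f) (hf0 : ∀ x, 0 ≤ f x)
    (hfq : Integrable (fun x => f x ^ q) μ) (hρ : 1 < ρ) (hq : 0 < q) :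
    ∑' k, levelMass μ f ρ q k ≠ ∞ := by
  have hbound : ENNReal.ofReal (ρ ^ q - 1) * ∑' k, levelMass μ f ρ q k ≤
      ENNReal.ofReal (ρ ^ q) * ∫⁻ x, ENNReal.ofReal (f x ^ q) ∂μ := by
    rw [tsum_levelMass_eq_lintegral_levelSum hf, ← lintegral_const_mul' _ _ ENNReal.ofReal_ne_top,
      ← lintegral_const_mul' _ _ ENNReal.ofReal_ne_top]
    exact lintegral_mono fun x => sub_one_mul_levelSum_le hρ hq (hf0 x)
  intro htop
  rw [htop, ENNReal.mul_top (by simpa using Real.one_lt_rpow hρ hq)] at hbound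
  exact (ENNReal.mul_lt_top ENNReal.ofReal_lt_top hfq.lintegral_lt_top).not_ge hbound

theorem measure_lt_ne_top_of_integrable_rpow (hfq : Integrable (fun x => f x ^ q) μ) (hq : 0 < q)
    {t : ℝ} (ht : 0 < t) : μ {x | t < f x} ≠ ∞ :=
  ne_top_of_le_ne_top (hfq.measure_gt_lt_top (Real.rpow_pos_of_pos ht q)).ne
    (measure_mono fun _ hx => Real.rpow_lt_rpow ht.le hx hq)

theorem levelMass_succ_le {p s θ β u : ℝ} (hf : Measurable f) (hρ : 1 < ρ) (hu : 0 ≤ u)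
    (hp : 0 < p) (hs : 0 < s) (hθ : θ ≤ 1) (hβ0 : 0 ≤ β) (hβ1 : β ≤ 1) (hθp : θ * p = q * β)
    (hθs : (1 - θ) * p / s = 1 - β) {k : ℤ} (hfin : μ {x | ρ ^ k < f x} ≠ ∞)
    (hk : (∫ x, truncLevel (ρ ^ k) (ρ ^ k * (ρ - 1)) (f x) ^ p ∂μ) ^ (1 / p) ≤
      u ^ θ * ((∫ x, truncLevel (ρ ^ k) (ρ ^ k * (ρ - 1)) (f x) ^ s ∂μ) ^ (1 / s)) ^ (1 - θ)) :
    levelMass μ f ρ q (k + 1) ≤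
      ENNReal.ofReal (ρ ^ q) * ENNReal.ofReal ((u / (ρ - 1)) ^ q) ^ β *
        levelMass μ f ρ q k ^ (1 - β) := by
  have hρ0 : 0 < ρ := one_pos.trans hρ
  have hstep : ρ ^ k + ρ ^ k * (ρ - 1) = ρ ^ (k + 1) := by rw [zpow_add_one₀ hρ0.ne']; ring
  have hmeas := measureReal_lt_le_of_interpolation hf (by positivity) hu hp hs hθ hfin hk
  rw [hstep, hθp, hθs, div_mul_eq_div_div_swap] at hmeas
  have hfin' : μ {x | ρ ^ (k + 1) < f x} ≠ ∞ := ne_top_of_le_ne_top hfin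
    (measure_mono fun _ hx => (zpow_lt_zpow_right₀ hρ (lt_add_one k)).trans hx)
  have hreal := zpow_succ_mul_le_of_le hρ0 (div_nonneg hu (sub_pos.2 hρ).le) measureReal_nonneg
    hmeas
  rw [levelMass, levelMass, ← ofReal_measureReal hfin, ← ofReal_measureReal hfin',
    ← ENNReal.ofReal_mul (by positivity), ← ENNReal.ofReal_mul (by positivity),
    ENNReal.ofReal_rpow_of_nonneg (by positivity) hβ0,
    ENNReal.ofReal_rpow_of_nonneg (by positivity) (sub_nonneg.2 hβ1),
    ← ENNReal.ofReal_mul (by positivity), ← ENNReal.ofReal_mul (by positivity)]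
  exact ENNReal.ofReal_le_ofReal hreal

theorem lintegral_rpow_le_of_levelMass_succ_le {β : ℝ} {c : ℤ → ℝ≥0∞} (hf : Measurable f)
    (hf0 : ∀ x, 0 ≤ f x) (hfq : Integrable (fun x => f x ^ q) μ) (hρ : 1 < ρ) (hq : 0 < q)
    (hβ0 : 0 < β) (hβ1 : β ≤ 1)
    (hrec : ∀ k, levelMass μ f ρ q (k + 1) ≤
      ENNReal.ofReal (ρ ^ q) * c k ^ β * levelMass μ f ρ q k ^ (1 - β)) :
    ∫⁻ x, ENNReal.ofReal (f x ^ q) ∂μ ≤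
      ENNReal.ofReal (ρ ^ q - 1) * (ENNReal.ofReal ((ρ ^ β⁻¹) ^ q) * ∑' k, c k) := by
  have hρ0 : 0 < ρ := one_pos.trans hρ
  have hpow : ENNReal.ofReal (ρ ^ q) ^ β⁻¹ = ENNReal.ofReal ((ρ ^ β⁻¹) ^ q) := by
    rw [ENNReal.ofReal_rpow_of_nonneg (by positivity) (inv_nonneg.2 hβ0.le),
      ← Real.rpow_mul hρ0.le, mul_comm, Real.rpow_mul hρ0.le]
  refine (lintegral_rpow_le_mul_tsum_levelMass hf hf0 hρ hq).trans ?_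
  rw [← hpow]
  gcongr
  exact ENNReal.tsum_le_rpow_inv_mul_tsum_of_succ_le hβ0 hβ1
    (tsum_levelMass_ne_top hf hf0 hfq hρ hq) hrec

end LevelMass

theorem integral_rpow_rpow_le_of_lintegral_le {M : Type*} [MeasurableSpace M] {μ : Measure M}
    {f : M → ℝ} {q c D : ℝ} (hf : Measurable f) (hf0 : ∀ x, 0 ≤ f x) (hq : 0 < q) (hc : 0 ≤ c)
    (hD : 0 ≤ D)
    (h : ∫⁻ x, ENNReal.ofReal (f x ^ q) ∂μ ≤ ENNReal.ofReal c * ENNReal.ofReal (D ^ q)) :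
    (∫ x, f x ^ q ∂μ) ^ (1 / q) ≤ c ^ (1 / q) * D := by
  have hint : ∫ x, f x ^ q ∂μ ≤ c * D ^ q := by
    rw [integral_eq_lintegral_of_nonneg_ae (ae_of_all _ fun x => Real.rpow_nonneg (hf0 x) q)
      (hf.pow_const q).aestronglyMeasurable]
    rw [← ENNReal.ofReal_mul hc] at h
    exact ENNReal.toReal_le_of_le_ofReal (by positivity) h
  calc (∫ x, f x ^ q ∂μ) ^ (1 / q) ≤ (c * D ^ q) ^ (1 / q) :=
        Real.rpow_le_rpow (integral_nonneg fun x => Real.rpow_nonneg (hf0 x) q) hint (by positivity)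
    _ = c ^ (1 / q) * D := by
        rw [Real.mul_rpow hc (by positivity), ← Real.rpow_mul hD, mul_one_div_cancel hq.ne',
          Real.rpow_one]

theorem interpolation_exponent_eq {s p q θ : ℝ} (hs : 0 < s) (hsp : s < p) (hpq : p < q)
    (hrel : 1 / p = θ / q + (1 - θ) / s) :
    θ * p = q * ((p - s) / (q - s)) ∧ (1 - θ) * p / s = 1 - (p - s) / (q - s) := by
  have hp : 0 < p := hs.trans hsp
  have hq : 0 < q := hp.trans hpq
  have hθp : θ * p = q * ((p - s) / (q - s)) := by
    rw [← mul_div_assoc, _root_.eq_div_iff (by linarith)]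
    field_simp at hrel
    linear_combination hrel
  refine ⟨hθp, ?_⟩
  calc (1 - θ) * p / s = p * (1 / p - θ / q) := by rw [hrel]; ring
    _ = 1 - θ * p / q := by field_simp
    _ = 1 - (p - s) / (q - s) := by rw [hθp]; field_simp

theorem stmt10_general {M : Type*} [MeasurableSpace M] (μ : Measure M)
    (f : M → ℝ) (hfm : Measurable f) (hf0 : ∀ x, 0 ≤ f x)
    (hfLp : ∀ r : ℝ, 0 < r → Integrable (fun x => f x ^ r) μ)
    (ρ : ℝ) (hρ : 1 < ρ) (s p q θ C A : ℝ)
    (hs : 0 < s) (hsp : s < p) (hpq : p < q)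
    (hθ1 : θ < 1) (hrel : 1 / p = θ / q + (1 - θ) / s)
    (hC : 0 < C) (hA : 0 < A) (w : ℝ) (hw0 : 0 ≤ w)
    (wk : ℤ → ℝ) (hwk : ∀ k, 0 ≤ wk k)
    (hSob : ∀ k : ℤ,
      (∫ x, (min (max (f x - ρ ^ k) 0) (ρ ^ k * (ρ - 1))) ^ p ∂μ) ^ (1 / p) ≤
        (C * wk k) ^ θ *
          ((∫ x, (min (max (f x - ρ ^ k) 0) (ρ ^ k * (ρ - 1))) ^ s ∂μ) ^ (1 / s)) ^ (1 - θ))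
    (hsum : (∑' k : ℤ, ENNReal.ofReal (wk k ^ p)) ≤ ENNReal.ofReal ((A * w) ^ p)) :
    (∫ x, f x ^ q ∂μ) ^ (1 / q) ≤
      (ρ ^ q - 1) ^ (1 / q) * ρ ^ ((q - s) / (p - s)) * (C * A / (ρ - 1)) * w := by
  have hp : 0 < p := hs.trans hsp
  have hq : 0 < q := hp.trans hpq
  have hρ0 : 0 < ρ := one_pos.trans hρ
  have hc : 0 ≤ C / (ρ - 1) := div_nonneg hC.le (sub_pos.2 hρ).le
  set β := (p - s) / (q - s) with hβ
  have hβ0 : 0 < β := div_pos (sub_pos.2 hsp) (by linarith)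
  have hβ1 : β ≤ 1 := (div_le_one (by linarith)).2 (by linarith)
  obtain ⟨hθp, hθs⟩ := interpolation_exponent_eq hs hsp hpq hrel
  have hrec : ∀ k : ℤ, levelMass μ f ρ q (k + 1) ≤ ENNReal.ofReal (ρ ^ q) *
      ENNReal.ofReal ((C / (ρ - 1) * wk k) ^ q) ^ β * levelMass μ f ρ q k ^ (1 - β) := fun k => by
    rw [← mul_div_right_comm]
    exact levelMass_succ_le hfm hρ (mul_nonneg hC.le (hwk k)) hp hs hθ1.le hβ0.le hβ1 hθp hθs
      (measure_lt_ne_top_of_integrable_rpow (hfLp q hq) hq (zpow_pos hρ0 k)) (hSob k)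
  have hlint : ∫⁻ x, ENNReal.ofReal (f x ^ q) ∂μ ≤ ENNReal.ofReal (ρ ^ q - 1) *
      ENNReal.ofReal ((ρ ^ β⁻¹ * (C / (ρ - 1) * (A * w))) ^ q) := by
    refine (lintegral_rpow_le_of_levelMass_succ_le hfm hf0 (hfLp q hq) hρ hq hβ0 hβ1 hrec).trans ?_
    rw [Real.mul_rpow (by positivity) (by positivity), ENNReal.ofReal_mul (by positivity)]
    gcongr
    exact tsum_ofReal_mul_rpow_le hwk hc (by positivity) hp hpq.le hsum
  refine (integral_rpow_rpow_le_of_lintegral_le hfm hf0 hq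
    (sub_nonneg.2 (Real.one_lt_rpow hρ hq).le) (by positivity) hlint).trans_eq ?_
  rw [hβ, inv_div]
  ring

/-- (Iteration lemma.) Let `ρ > 1`, `0 < s < p < q < ∞` and `θ ∈ (0, 1)`
with `1/p = θ/q + (1 − θ)/s`, let `C > 0`, `A > 0`, `w ≥ 0` (`w = W(f)`), and let
`(w_k)_{k∈ℤ}` be nonnegative (`w_k = W(f_{ρ,k})`).  Assume:
(i) for every `k ∈ ℤ` the truncation `f_{ρ,k} := min((f − ρ^k)⁺, ρ^k(ρ − 1))` satisfies
`‖f_{ρ,k}‖_p ≤ (C w_k)^θ ‖f_{ρ,k}‖_s^{1−θ}`; and (ii) `Σ_k w_k^p ≤ (A w)^p`.  Then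
`‖f‖_q ≤ (ρ^q − 1)^{1/q} ρ^{(q−s)/(p−s)} (C A/(ρ − 1)) w`, where `‖f‖_r := (∫ f^r dμ)^{1/r}`. -/
theorem stmt10 {M : Type*} [MeasurableSpace M] (μ : Measure M) [SigmaFinite μ]
    (f : M → ℝ) (hfm : Measurable f) (hf0 : ∀ x, 0 ≤ f x)
    (hfLp : ∀ r : ℝ, 0 < r → Integrable (fun x => f x ^ r) μ)
    (ρ : ℝ) (hρ : 1 < ρ) (s p q θ C A : ℝ)
    (hs : 0 < s) (hsp : s < p) (hpq : p < q)
    (hθ0 : 0 < θ) (hθ1 : θ < 1) (hrel : 1 / p = θ / q + (1 - θ) / s)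
    (hC : 0 < C) (hA : 0 < A) (w : ℝ) (hw0 : 0 ≤ w)
    (wk : ℤ → ℝ) (hwk : ∀ k, 0 ≤ wk k)
    (hSob : ∀ k : ℤ,
      (∫ x, (min (max (f x - ρ ^ k) 0) (ρ ^ k * (ρ - 1))) ^ p ∂μ) ^ (1 / p) ≤
        (C * wk k) ^ θ *
          ((∫ x, (min (max (f x - ρ ^ k) 0) (ρ ^ k * (ρ - 1))) ^ s ∂μ) ^ (1 / s)) ^ (1 - θ))
    (hsum : (∑' k : ℤ, ENNReal.ofReal (wk k ^ p)) ≤ ENNReal.ofReal ((A * w) ^ p)) :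
    (∫ x, f x ^ q ∂μ) ^ (1 / q) ≤
      (ρ ^ q - 1) ^ (1 / q) * ρ ^ ((q - s) / (p - s)) * (C * A / (ρ - 1)) * w :=
  stmt10_general μ f hfm hf0 hfLp ρ hρ s p q θ C A hs hsp hpq hθ1 hrel hC hA w hw0 wk hwk hSob hsum
end
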